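/- arXiv:math/0506201 — 5 statements merged into one kernel-verified Lean document; each statement's English description precedes it below -/
import Mathlib

section
/- Let (M,d_M) be a metric space containing at least two points. Then for every positive integer n, every Γ > 0 and all p, q > 0, the least even integer m for which the metric cotype inequality holds satisfies m_q^{(p)}(M;n,Γ) ≥ n^{1/q}/Γ. -/
open scoped BigOperators ENNReal
open Filter

noncomputable section

namespace MetricCotypePaper

/-- A point of `(ℤ/mℤ)^n`, parametrized by `Fin m` coordinates (so that summing over
`Fin n → Fin m` is summing over all of `(ℤ/mℤ)^n` when `m > 0`). -/
def toZMod {m n : ℕ} (x : Fin n → Fin m) : Fin n → ZMod m :=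
  fun i => ((x i : ℕ) : ZMod m)

/-- An element of `{-1,0,1}^n ⊆ (ℤ/mℤ)^n`, encoded by `Fin 3`. -/
def eps3 (m : ℕ) {n : ℕ} (ε : Fin n → Fin 3) : Fin n → ZMod m :=
  fun i => ((((ε i : ℕ) : ℤ) - 1 : ℤ) : ZMod m)

/-- An element of `{-1,1}^n ⊆ (ℤ/mℤ)^n`, encoded by `Bool`. -/
def epsPM (m : ℕ) {n : ℕ} (ε : Fin n → Bool) : Fin n → ZMod m :=
  fun i => if ε i then (1 : ZMod m) else (-1 : ZMod m)

/-- The sign `±1` associated to a boolean. -/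
def sgn (b : Bool) : ℝ := if b then 1 else -1

/-- The metric cotype `q` (with exponent `p`) inequality, with constant `Γ`, at parameters
`(n, m)`: for every `f : (ℤ/mℤ)^n → M`,
`∑_j ∫ d(f(x + (m/2)e_j), f(x))^p dμ(x)
   ≤ Γ^p m^p n^{1-p/q} ∫∫ d(f(x+ε), f(x))^p dμ(x) dσ(ε)`,
where `μ` (resp. `σ`) is the uniform probability measure on `(ℤ/mℤ)^n`
(resp. on `{-1,0,1}^n`).  Both sides have been multiplied by `m^n`. -/
def CotypeIneq (M : Type*) [PseudoMetricSpace M] (p q : ℝ) (n m : ℕ) (Γ : ℝ) : Prop :=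
  ∀ f : (Fin n → ZMod m) → M,
    ∑ j : Fin n, ∑ x : Fin n → Fin m,
        dist (f (toZMod x + Pi.single j ((m / 2 : ℕ) : ZMod m))) (f (toZMod x)) ^ p
      ≤ Γ ^ p * (m : ℝ) ^ p * (n : ℝ) ^ (1 - p / q) * ((3 : ℝ) ^ n)⁻¹ *
          ∑ ε : Fin n → Fin 3, ∑ x : Fin n → Fin m,
            dist (f (toZMod x + eps3 m ε)) (f (toZMod x)) ^ p

/-- `Γ_q^{(p)}(M; n, m)`, as an extended nonnegative real (`∞` if no constant works). -/
def gammaNM (M : Type*) [PseudoMetricSpace M] (p q : ℝ) (n m : ℕ) : ℝ≥0∞ :=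
  ⨅ Γ ∈ {Γ : ℝ | 0 < Γ ∧ CotypeIneq M p q n m Γ}, ENNReal.ofReal Γ

/-- `Γ_q^{(p)}(M) = sup_{n ≥ 1} inf {Γ_q^{(p)}(M; n, m) : m even}`. -/
def gamma (M : Type*) [PseudoMetricSpace M] (p q : ℝ) : ℝ≥0∞ :=
  ⨆ n ∈ {n : ℕ | 1 ≤ n}, ⨅ m ∈ {m : ℕ | Even m ∧ 0 < m}, gammaNM M p q n m

/-- `∑_j ε_j x_j` for a choice of signs `ε ∈ {-1,1}^n`. -/
def radSum {X : Type*} [NormedAddCommGroup X] [NormedSpace ℝ X] {n : ℕ}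
    (ε : Fin n → Bool) (x : Fin n → X) : X :=
  ∑ j, sgn (ε j) • x j

/-- The Rademacher cotype `q` inequality with constant `C`:
`E_ε ‖∑_j ε_j x_j‖^q ≥ C^{-q} ∑_j ‖x_j‖^q`. -/
def CotypeRadIneq (X : Type*) [NormedAddCommGroup X] [NormedSpace ℝ X] (q C : ℝ) : Prop :=
  ∀ (n : ℕ) (x : Fin n → X),
    C ^ (-q) * ∑ j, ‖x j‖ ^ q ≤ ((2 : ℝ) ^ n)⁻¹ * ∑ ε : Fin n → Bool, ‖radSum ε x‖ ^ q

/-- `X` has Rademacher cotype `q`, i.e. `C_q(X) < ∞`. -/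
def HasRadCotype (X : Type*) [NormedAddCommGroup X] [NormedSpace ℝ X] (q : ℝ) : Prop :=
  ∃ C : ℝ, 0 < C ∧ CotypeRadIneq X q C

/-- `C_q(X)`, the optimal Rademacher cotype `q` constant (`∞` if there is none). -/
def cotypeConst (X : Type*) [NormedAddCommGroup X] [NormedSpace ℝ X] (q : ℝ) : ℝ≥0∞ :=
  ⨅ C ∈ {C : ℝ | 0 < C ∧ CotypeRadIneq X q C}, ENNReal.ofReal C

/-- The Rademacher type `p` inequality with constant `T`:
`E_ε ‖∑_j ε_j x_j‖^p ≤ T^p ∑_j ‖x_j‖^p`. -/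
def TypeIneq (X : Type*) [NormedAddCommGroup X] [NormedSpace ℝ X] (p T : ℝ) : Prop :=
  ∀ (n : ℕ) (x : Fin n → X),
    ((2 : ℝ) ^ n)⁻¹ * ∑ ε : Fin n → Bool, ‖radSum ε x‖ ^ p ≤ T ^ p * ∑ j, ‖x j‖ ^ p

/-- `X` has nontrivial type: type `p` for some `p > 1`. -/
def NontrivialType (X : Type*) [NormedAddCommGroup X] [NormedSpace ℝ X] : Prop :=
  ∃ p T : ℝ, 1 < p ∧ TypeIneq X p T

/-- `q_X = inf {q ∈ [2,∞) : C_q(X) < ∞}`, an element of `[2,∞]` (with `inf ∅ = ∞`). -/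
def qBanach (X : Type*) [NormedAddCommGroup X] [NormedSpace ℝ X] : ℝ≥0∞ :=
  ⨅ q ∈ {q : ℝ | 2 ≤ q ∧ HasRadCotype X q}, ENNReal.ofReal q

/-- `M` embeds into `N` with distortion at most `D`: there is an injective `f` with
`Lip(f)·Lip(f⁻¹) ≤ D`, i.e. (after rescaling by some `r > 0`)
`r·d(x,y) ≤ d(f(x),f(y)) ≤ D·r·d(x,y)`. -/
def EmbedsWithDistortion (M N : Type*) [PseudoMetricSpace M] [PseudoMetricSpace N]
    (D : ℝ) : Prop :=
  ∃ (f : M → N) (r : ℝ), 0 < r ∧ ∀ x y : M,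
    r * dist x y ≤ dist (f x) (f y) ∧ dist (f x) (f y) ≤ D * (r * dist x y)

/-- `c_N(M) = inf {dist(f) : f : M → N injective}`, as an extended nonnegative real. -/
def cEmbed (M N : Type*) [PseudoMetricSpace M] [PseudoMetricSpace N] : ℝ≥0∞ :=
  ⨅ D ∈ {D : ℝ | EmbedsWithDistortion M N D}, ENNReal.ofReal D

/-- `f` is a uniform embedding: injective, uniformly continuous, with uniformly
continuous inverse. -/
def IsUniformEmbeddingMap {M N : Type*} [PseudoMetricSpace M] [PseudoMetricSpace N]
    (f : M → N) : Prop :=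
  Function.Injective f ∧ UniformContinuous f ∧
    ∀ δ : ℝ, 0 < δ → ∃ ε : ℝ, 0 < ε ∧ ∀ x y : M, dist (f x) (f y) < ε → dist x y < δ

/-- `f` is a coarse embedding. -/
def IsCoarseEmbeddingMap {M N : Type*} [PseudoMetricSpace M] [PseudoMetricSpace N]
    (f : M → N) : Prop :=
  ∃ α β : ℝ → ℝ, Monotone α ∧ Monotone β ∧ Tendsto α atTop atTop ∧
    ∀ x y : M, α (dist x y) ≤ dist (f x) (f y) ∧ dist (f x) (f y) ≤ β (dist x y)

/-- The grid `[m]_∞^n = {0,1,…,m}^n`, equipped with the `ℓ_∞^n` metric (as a subspace of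
`ℤ^n` with the sup metric). -/
abbrev Grid (m n : ℕ) : Type :=
  {x : Fin n → ℤ // ∀ i, x i ∈ Set.Icc (0 : ℤ) (m : ℤ)}

end MetricCotypePaper

open MetricCotypePaper in
/-- **Lemma 2.3.**  Let `M` be a metric space with at least two points.  Then for every
`n ≥ 1`, `Γ > 0` and `p, q > 0`, any even `m` for which the metric cotype inequality
holds at `(n, m)` with constant `Γ` satisfies `m ≥ n^{1/q}/Γ`; in particular
`m_q^{(p)}(M; n, Γ) ≥ n^{1/q}/Γ`. -/
theorem lower_bound_on_m (M : Type*) [MetricSpace M] (hM : ∃ x y : M, x ≠ y)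
    (n : ℕ) (hn : 1 ≤ n) (Γ p q : ℝ) (hΓ : 0 < Γ) (hp : 0 < p) (hq : 0 < q) :
    ∀ m : ℕ, Even m → 0 < m → CotypeIneq M p q n m Γ →
      (n : ℝ) ^ (1 / q) / Γ ≤ (m : ℝ) := by
  obtain ⟨a, b, hab⟩ := hM
  intro m hmeven hm hC
  haveI : NeZero m := ⟨hm.ne'⟩
  have hk0 : 0 < m / 2 := by
    obtain ⟨k, hk⟩ := hmeven; omega
  set k := m / 2 with hkdef
  have hm2 : m = 2 * k := by
    obtain ⟨k', hk'⟩ := hmeven; omega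
  have hD0 : (0:ℝ) < dist a b := dist_pos.mpr hab
  set D := dist a b with hD
  set f : (Fin n → ZMod m) → M :=
    fun x => if (∑ i, (((x i).val / k : ℕ) : ZMod 2)) = 0 then a else b with hf
  -- bit flip on one coordinate
  have hflip : ∀ t : ZMod m, (t + ((k:ℕ) : ZMod m)).val / k + t.val / k = 1 := by
    intro t
    have h1 : t.val < m := ZMod.val_lt t
    have h2 : (t + ((k:ℕ):ZMod m)).val = (t.val + k) % m := by
      rw [ZMod.val_add, ZMod.val_cast_of_lt (by omega)]
    rw [h2]
    rcases lt_or_ge t.val k with h | h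
    · rw [Nat.mod_eq_of_lt (by omega), Nat.add_div_right _ hk0,
        Nat.div_eq_of_lt h]
    · have h3 : (t.val + k) % m = t.val - k := by
        have : t.val + k - m = t.val - k := by omega
        rw [Nat.mod_eq_sub_mod (by omega), this, Nat.mod_eq_of_lt (by omega)]
      rw [h3, Nat.div_eq_of_lt (by omega)]
      have : t.val = (t.val - k) + k := by omega
      rw [this, Nat.add_div_right _ hk0, Nat.div_eq_of_lt (by omega)]
  -- parity of the sum flips
  have hpar : ∀ (x : Fin n → Fin m) (j : Fin n),
      (∑ i, (((((toZMod x + Pi.single j ((k:ℕ):ZMod m) : Fin n → ZMod m) i)).val / k : ℕ) : ZMod 2))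
        = (∑ i, (((toZMod x i).val / k : ℕ) : ZMod 2)) + 1 := by
    intro x j
    have hterm : ∀ i : Fin n,
        (((((toZMod x + Pi.single j ((k:ℕ):ZMod m) : Fin n → ZMod m) i)).val / k : ℕ) : ZMod 2)
          = (((toZMod x i).val / k : ℕ) : ZMod 2) + (if i = j then 1 else 0) := by
      intro i
      by_cases hij : i = j
      · subst hij
        simp only [Pi.add_apply, Pi.single_eq_same]
        rw [if_pos trivial]
        have h := hflip (toZMod x i)
        have h2 := congrArg (fun t : ℕ => (t : ZMod 2)) h
        push_cast at h2
        have hz : (2 : ZMod 2) = 0 := by decide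
        linear_combination h2 - ((((toZMod x i).val / k : ℕ) : ZMod 2)) * hz
      · simp [Pi.single_eq_of_ne hij, hij]
    rw [Finset.sum_congr rfl (fun i _ => hterm i), Finset.sum_add_distrib]
    simp
  -- distance along the diagonal shift is exactly D
  have hdd : ∀ (x : Fin n → Fin m) (j : Fin n),
      dist (f (toZMod x + Pi.single j ((k:ℕ):ZMod m))) (f (toZMod x)) = D := by
    intro x j
    simp only [hf]
    rw [hpar x j]
    rcases (show ∀ u : ZMod 2, u = 0 ∨ u = 1 by decide)
        (∑ i, (((toZMod x i).val / k : ℕ) : ZMod 2)) with h | h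
    · rw [h, if_neg (by decide : ¬((0:ZMod 2) + 1 = 0)), if_pos rfl]
      exact dist_comm b a
    · rw [h, if_pos (by decide : (1:ZMod 2) + 1 = 0),
        if_neg (by decide : ¬((1:ZMod 2) = 0))]
  -- all distances are at most D
  have hdiam : ∀ u w : Fin n → ZMod m, dist (f u) (f w) ≤ D := by
    intro u w
    simp only [hf]
    split_ifs <;> simp [dist_comm, hD0.le, hD, dist_nonneg]
  have key := hC f
  rw [show ((m / 2 : ℕ) : ZMod m) = ((k:ℕ) : ZMod m) from rfl] at key
  have hcardx : (Fintype.card (Fin n → Fin m) : ℝ) = (m : ℝ) ^ n := by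
    simp [Fintype.card_pi]
  have hcarde : (Fintype.card (Fin n → Fin 3) : ℝ) = (3 : ℝ) ^ n := by
    simp [Fintype.card_pi]
  -- LHS is exactly n * m^n * D^p
  have hLHS : ∑ j : Fin n, ∑ x : Fin n → Fin m,
      dist (f (toZMod x + Pi.single j ((k:ℕ):ZMod m))) (f (toZMod x)) ^ p
        = (n : ℝ) * (m : ℝ) ^ n * D ^ p := by
    have h1 : ∀ j : Fin n, ∑ x : Fin n → Fin m,
        dist (f (toZMod x + Pi.single j ((k:ℕ):ZMod m))) (f (toZMod x)) ^ p
          = (m : ℝ) ^ n * D ^ p := by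
      intro j
      rw [Finset.sum_congr rfl (fun x _ => by rw [hdd x j])]
      rw [Finset.sum_const, Finset.card_univ, nsmul_eq_mul, hcardx]
    rw [Finset.sum_congr rfl (fun j _ => h1 j), Finset.sum_const, Finset.card_univ,
      nsmul_eq_mul, Fintype.card_fin]
    ring
  -- RHS double sum is at most 3^n * m^n * D^p
  have hRHS : ∑ ε : Fin n → Fin 3, ∑ x : Fin n → Fin m,
      dist (f (toZMod x + eps3 m ε)) (f (toZMod x)) ^ p
        ≤ (3 : ℝ) ^ n * ((m : ℝ) ^ n * D ^ p) := by
    calc ∑ ε : Fin n → Fin 3, ∑ x : Fin n → Fin m,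
        dist (f (toZMod x + eps3 m ε)) (f (toZMod x)) ^ p
        ≤ ∑ _ε : Fin n → Fin 3, ∑ _x : Fin n → Fin m, D ^ p := by
          refine Finset.sum_le_sum fun ε _ => Finset.sum_le_sum fun x _ => ?_
          exact Real.rpow_le_rpow dist_nonneg (hdiam _ _) hp.le
      _ = (3 : ℝ) ^ n * ((m : ℝ) ^ n * D ^ p) := by
          rw [Finset.sum_const, Finset.card_univ, nsmul_eq_mul,
            Finset.sum_const, Finset.card_univ, nsmul_eq_mul, hcarde, hcardx]
  have hnpos : (0:ℝ) < (n:ℝ) := by exact_mod_cast hn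
  -- reduce to the scalar inequality
  have h1 : (n : ℝ) ≤ Γ ^ p * (m : ℝ) ^ p * (n : ℝ) ^ (1 - p / q) := by
    have hX : (0:ℝ) < (m : ℝ) ^ n * D ^ p := by
      have : (0:ℝ) < D ^ p := Real.rpow_pos_of_pos hD0 p
      positivity
    have hcoef : (0:ℝ) ≤ Γ ^ p * (m : ℝ) ^ p * (n : ℝ) ^ (1 - p / q) := by positivity
    have h3n : ((3:ℝ) ^ n)⁻¹ * (3:ℝ) ^ n = 1 := by
      rw [inv_mul_cancel₀]; positivity
    have hstep : (n : ℝ) * ((m : ℝ) ^ n * D ^ p)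
        ≤ (Γ ^ p * (m : ℝ) ^ p * (n : ℝ) ^ (1 - p / q)) * ((m : ℝ) ^ n * D ^ p) := by
      calc (n : ℝ) * ((m : ℝ) ^ n * D ^ p)
          = (n : ℝ) * (m : ℝ) ^ n * D ^ p := by ring
        _ ≤ Γ ^ p * (m : ℝ) ^ p * (n : ℝ) ^ (1 - p / q) * ((3 : ℝ) ^ n)⁻¹ *
            ∑ ε : Fin n → Fin 3, ∑ x : Fin n → Fin m,
              dist (f (toZMod x + eps3 m ε)) (f (toZMod x)) ^ p := by
            rw [← hLHS]; exact key
        _ ≤ Γ ^ p * (m : ℝ) ^ p * (n : ℝ) ^ (1 - p / q) * ((3 : ℝ) ^ n)⁻¹ *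
            ((3 : ℝ) ^ n * ((m : ℝ) ^ n * D ^ p)) := by
            refine mul_le_mul_of_nonneg_left hRHS ?_
            positivity
        _ = (Γ ^ p * (m : ℝ) ^ p * (n : ℝ) ^ (1 - p / q)) * ((m : ℝ) ^ n * D ^ p) := by
            rw [mul_assoc (Γ ^ p * (m : ℝ) ^ p * (n : ℝ) ^ (1 - p / q)) _ _]
            rw [← mul_assoc (((3:ℝ)^n)⁻¹) _ _, h3n, one_mul]
    exact le_of_mul_le_mul_right hstep hX
  -- algebra: n^{p/q} ≤ (Γ m)^p
  have h2 : (n : ℝ) ^ (p / q) ≤ (Γ * (m : ℝ)) ^ p := by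
    have hmul := mul_le_mul_of_nonneg_right h1
      (le_of_lt (Real.rpow_pos_of_pos hnpos (p / q - 1)))
    have e1 : (n : ℝ) * (n : ℝ) ^ (p / q - 1) = (n : ℝ) ^ (p / q) := by
      nth_rewrite 1 [← Real.rpow_one (n:ℝ)]
      rw [← Real.rpow_add hnpos]; ring_nf
    have e2 : (n : ℝ) ^ (1 - p / q) * (n : ℝ) ^ (p / q - 1) = 1 := by
      rw [← Real.rpow_add hnpos]
      norm_num
    calc (n : ℝ) ^ (p / q) = (n : ℝ) * (n : ℝ) ^ (p / q - 1) := e1.symm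
      _ ≤ Γ ^ p * (m : ℝ) ^ p * (n : ℝ) ^ (1 - p / q) * (n : ℝ) ^ (p / q - 1) := hmul
      _ = Γ ^ p * (m : ℝ) ^ p * ((n : ℝ) ^ (1 - p / q) * (n : ℝ) ^ (p / q - 1)) := by ring
      _ = Γ ^ p * (m : ℝ) ^ p := by rw [e2, mul_one]
      _ = (Γ * (m : ℝ)) ^ p := (Real.mul_rpow hΓ.le (Nat.cast_nonneg m)).symm
  have h3 : (n : ℝ) ^ (1 / q) ≤ Γ * (m : ℝ) := by
    rw [← Real.rpow_le_rpow_iff (z := p) (by positivity) (by positivity) hp,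
      ← Real.rpow_mul hnpos.le]
    have hexp : 1 / q * p = p / q := by ring
    rw [hexp]; exact h2
  rw [div_le_iff₀ hΓ]
  calc (n : ℝ) ^ (1 / q) ≤ Γ * (m : ℝ) := h3
    _ = (m : ℝ) * Γ := mul_comm _ _
end
end

section
/- Let (M,d_M) be a metric space, 1 ≤ p ≤ q, n a positive integer and m an even integer. Assume that for some C > 0, for every ℓ ≤ n and every f : (ℤ/mℤ)^ℓ → M, ∑_{j=1}^ℓ ∫ d_M(f(x + (m/2)e_j), f(x))^p dμ(x) ≤ C^p m^p n^{1−p/q} ( E_{ε∈{−1,1}^ℓ} ∫ d_M(f(x+ε), f(x))^p dμ(x) + (1/ℓ) ∑_{j=1}^ℓ ∫ d_M(f(x+e_j), f(x))^p dμ(x) ), where the expectation is over uniform ε ∈ {−1,1}^ℓ. Then Γ_q^{(p)}(M;n,m) ≤ 5C. -/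
open scoped BigOperators ENNReal
open Filter

noncomputable section

set_option linter.unusedSectionVars false
set_option linter.unusedVariables false
set_option maxHeartbeats 1000000

open Finset MetricCotypePaper

namespace MCPAux

lemma rpow_add_le2 {p : ℝ} (hp : 1 ≤ p) {a b : ℝ} (ha : 0 ≤ a) (hb : 0 ≤ b) :
    (a + b) ^ p ≤ 2 ^ (p - 1) * (a ^ p + b ^ p) := by
  have h := NNReal.rpow_add_le_mul_rpow_add_rpow a.toNNReal b.toNNReal hp
  have := NNReal.coe_le_coe.2 h
  push_cast at this
  rwa [Real.coe_toNNReal a ha, Real.coe_toNNReal b hb] at this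

variable {M : Type*} [MetricSpace M] {m n : ℕ} [NeZero m] (p : ℝ)
  (f : (Fin n → ZMod m) → M)

/-- The basic quantity `T(v) = ∑_x d(f(x+v), f(x))^p`. -/
def TT (v : Fin n → ZMod m) : ℝ :=
  ∑ x : Fin n → ZMod m, dist (f (x + v)) (f x) ^ p

lemma TT_nonneg (v : Fin n → ZMod m) : 0 ≤ TT p f v :=
  Finset.sum_nonneg fun _ _ => Real.rpow_nonneg dist_nonneg _

lemma TT_zero (hp : 1 ≤ p) : TT p f 0 = 0 := by
  have hp0 : p ≠ 0 := by linarith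
  simp [TT, Real.zero_rpow hp0]

lemma sum_shift (F : (Fin n → ZMod m) → ℝ) (v : Fin n → ZMod m) :
    ∑ x : Fin n → ZMod m, F (x + v) = ∑ x : Fin n → ZMod m, F x :=
  Fintype.sum_equiv (Equiv.addRight v) _ _ (fun _ => rfl)

lemma TT_neg (v : Fin n → ZMod m) : TT p f (-v) = TT p f v := by
  have : TT p f (-v) = ∑ x : Fin n → ZMod m, dist (f ((x + v) + -v)) (f (x + v)) ^ p :=
    (sum_shift (fun x => dist (f (x + -v)) (f x) ^ p) v).symm
  rw [this]
  simp only [add_neg_cancel_right]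
  exact Finset.sum_congr rfl fun x _ => by rw [dist_comm]

lemma TT_add_le (hp : 1 ≤ p) (u v : Fin n → ZMod m) :
    TT p f (u + v) ≤ 2 ^ (p - 1) * (TT p f u + TT p f v) := by
  have key : ∀ x : Fin n → ZMod m,
      dist (f (x + (u + v))) (f x) ^ p
        ≤ 2 ^ (p - 1) * (dist (f ((x + v) + u)) (f (x + v)) ^ p
            + dist (f (x + v)) (f x) ^ p) := by
    intro x
    have htri : dist (f (x + (u + v))) (f x)
        ≤ dist (f ((x + v) + u)) (f (x + v)) + dist (f (x + v)) (f x) := by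
      have : x + (u + v) = (x + v) + u := by ring
      rw [this]
      exact dist_triangle _ _ _
    calc dist (f (x + (u + v))) (f x) ^ p
        ≤ (dist (f ((x + v) + u)) (f (x + v)) + dist (f (x + v)) (f x)) ^ p :=
          Real.rpow_le_rpow dist_nonneg htri (by linarith)
      _ ≤ _ := rpow_add_le2 hp dist_nonneg dist_nonneg
  calc TT p f (u + v) ≤ ∑ x : Fin n → ZMod m,
      2 ^ (p - 1) * (dist (f ((x + v) + u)) (f (x + v)) ^ p
        + dist (f (x + v)) (f x) ^ p) := Finset.sum_le_sum fun x _ => key x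
    _ = 2 ^ (p - 1) * (TT p f u + TT p f v) := by
        rw [← Finset.mul_sum, Finset.sum_add_distrib]
        congr 2
        exact sum_shift (fun y => dist (f (y + u)) (f y) ^ p) v

lemma TT_sub_add (hp : 1 ≤ p) (w v : Fin n → ZMod m) :
    TT p f w ≤ 2 ^ (p - 1) * (TT p f (w - v) + TT p f v) := by
  have : w = (w - v) + v := by ring
  nth_rewrite 1 [this]
  exact TT_add_le p f hp _ _


lemma fin3_cases (v : Fin 3) : v = 0 ∨ v = 1 ∨ v = 2 := by revert v; decide

/-- flip of the cube-code: `0 ↔ 2`, fixing `1` (i.e. `x ↦ -x` on `{-1,0,1}`). -/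
def flip3 : Fin 3 → Fin 3 := fun v => 2 - v

/-- flip all coordinates except `j`, setting coordinate `j` to code `1` (value 0). -/
def flipj {n : ℕ} (j : Fin n) (c : Fin n → Fin 3) : Fin n → Fin 3 :=
  fun i => if i = j then 1 else flip3 (c i)

/-- like `flipj` but setting coordinate `j` to code `w`. -/
def flipjw {n : ℕ} (j : Fin n) (w : Fin 3) (c : Fin n → Fin 3) : Fin n → Fin 3 :=
  fun i => if i = j then w else flip3 (c i)

lemma flip3_flip3 (v : Fin 3) : flip3 (flip3 v) = v := by revert v; decide

variable {m n : ℕ} [NeZero m]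

lemma eps3_flip3 (v : Fin 3) :
    ((((flip3 v : Fin 3) : ℕ) : ℤ) - 1 : ℤ) = -((((v : Fin 3) : ℕ) : ℤ) - 1) := by
  revert v; decide

lemma eps3_single_sub_two {j : Fin n} {c : Fin n → Fin 3} (hc : c j = 2) :
    Pi.single j (1 : ZMod m) - eps3 m c = eps3 m (flipj j c) := by
  funext i
  by_cases h : i = j
  · subst h
    simp only [Pi.sub_apply, Pi.single_eq_same, eps3, flipj, if_pos rfl, hc, eq_self_iff_true, if_true]
    rw [show ((((2 : Fin 3) : ℕ) : ℤ) - 1 : ℤ) = 1 by decide,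
      show ((((1 : Fin 3) : ℕ) : ℤ) - 1 : ℤ) = 0 by decide]
    push_cast
    ring
  · simp only [Pi.sub_apply, Pi.single_eq_of_ne h, eps3, flipj, if_neg h]
    rw [eps3_flip3]
    push_cast
    ring

lemma eps3_neg_single_sub_zero {j : Fin n} {c : Fin n → Fin 3} (hc : c j = 0) :
    (-Pi.single j (1 : ZMod m)) - eps3 m c = eps3 m (flipj j c) := by
  funext i
  by_cases h : i = j
  · subst h
    simp only [Pi.sub_apply, Pi.neg_apply, Pi.single_eq_same, eps3, flipj, if_pos rfl, hc, eq_self_iff_true, if_true]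
    rw [show ((((0 : Fin 3) : ℕ) : ℤ) - 1 : ℤ) = -1 by decide,
      show ((((1 : Fin 3) : ℕ) : ℤ) - 1 : ℤ) = 0 by decide]
    push_cast
    ring
  · simp only [Pi.sub_apply, Pi.neg_apply, Pi.single_eq_of_ne h, eps3, flipj, if_neg h]
    rw [eps3_flip3]
    push_cast
    ring

/-- the slab `{c : cube codes | c j = v}`. -/
def slabF (j : Fin n) (v : Fin 3) : Finset (Fin n → Fin 3) :=
  univ.filter (fun c => c j = v)

lemma mem_slabF {j : Fin n} {v : Fin 3} {c : Fin n → Fin 3} :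
    c ∈ slabF j v ↔ c j = v := by simp [slabF]

lemma flipj_mem_slab {j : Fin n} (c : Fin n → Fin 3) : flipj j c ∈ slabF j 1 := by
  simp [mem_slabF, flipj]

lemma slab_card_eq (j : Fin n) (v w : Fin 3) : (slabF j v).card = (slabF j w).card := by
  apply Finset.card_nbij' (fun c => Function.update c j w) (fun c => Function.update c j v)
  · intro c hc; simp [mem_slabF]
  · intro c hc; simp [mem_slabF]
  · intro c hc
    beta_reduce
    rw [Function.update_idem]
    rw [Finset.mem_coe, mem_slabF] at hc
    rw [← hc, Function.update_eq_self]
  · intro c hc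
    beta_reduce
    rw [Function.update_idem]
    rw [Finset.mem_coe, mem_slabF] at hc
    rw [← hc, Function.update_eq_self]

lemma slab_card (hn : 1 ≤ n) (j : Fin n) (v : Fin 3) : (slabF j v).card = 3 ^ (n - 1) := by
  have hsum : ∑ w : Fin 3, (slabF j w).card = 3 ^ n := by
    have := Finset.card_eq_sum_card_fiberwise
      (f := fun c : Fin n → Fin 3 => c j) (s := univ) (t := univ) (fun x _ => mem_univ _)
    rw [card_univ] at this
    simp only [Fintype.card_fun, Fintype.card_fin] at this
    simpa [slabF] using this.symm
  rw [Fin.sum_univ_three] at hsum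
  rw [slab_card_eq j 0 v, slab_card_eq j 1 v, slab_card_eq j 2 v] at hsum
  have h3 : 3 ^ n = 3 * 3 ^ (n - 1) := by
    conv_lhs => rw [show n = (n - 1) + 1 by omega]
    ring
  omega


/-- code tables for splitting a slab-0 vector as (slab +1) + (slab -1) -/
def pcode : Fin 3 → Bool → Fin 3
  | 1, true => 2 | 1, false => 0 | 2, true => 2 | 2, false => 1
  | 0, true => 0 | 0, false => 1
def mcode : Fin 3 → Bool → Fin 3
  | 1, true => 0 | 1, false => 2 | 2, true => 1 | 2, false => 2
  | 0, true => 1 | 0, false => 0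
def paux : Fin 3 → Bool → Bool := fun v b => if v = 1 then true else if v = 2 then !b else false
def pinvC : Fin 3 → Bool → Fin 3
  | 2, true => 1 | 2, false => 2 | 0, true => 1 | 0, false => 0
  | 1, true => 2 | 1, false => 0
def pinvB : Fin 3 → Bool → Bool
  | 2, true => true | 2, false => true | 0, true => false | 0, false => true
  | 1, true => false | 1, false => false
def maux : Fin 3 → Bool → Bool := fun v b => if v = 1 then true else if v = 2 then b else false
def minvC : Fin 3 → Bool → Fin 3
  | 0, true => 1 | 0, false => 0 | 2, true => 1 | 2, false => 2
  | 1, true => 2 | 1, false => 0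
def minvB : Fin 3 → Bool → Bool
  | 0, true => true | 0, false => false | 2, true => false | 2, false => false
  | 1, true => true | 1, false => true

lemma pm_int (v : Fin 3) (b : Bool) :
    (((v : ℕ) : ℤ) - 1) = ((((pcode v b : Fin 3) : ℕ) : ℤ) - 1)
      + ((((mcode v b : Fin 3) : ℕ) : ℤ) - 1) := by revert v b; decide

lemma p_roundtrip1 (v : Fin 3) (b : Bool) :
    pinvC (pcode v b) (paux v b) = v ∧ pinvB (pcode v b) (paux v b) = b := by revert v b; decide
lemma p_roundtrip2 (v : Fin 3) (b : Bool) :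
    pcode (pinvC v b) (pinvB v b) = v ∧ paux (pinvC v b) (pinvB v b) = b := by revert v b; decide
lemma m_roundtrip1 (v : Fin 3) (b : Bool) :
    minvC (mcode v b) (maux v b) = v ∧ minvB (mcode v b) (maux v b) = b := by revert v b; decide
lemma m_roundtrip2 (v : Fin 3) (b : Bool) :
    mcode (minvC v b) (minvB v b) = v ∧ maux (minvC v b) (minvB v b) = b := by revert v b; decide


section Chains
variable {M : Type*} [MetricSpace M] {m n : ℕ} [NeZero m] (p : ℝ)
  (f : (Fin n → ZMod m) → M)

/-- `W j v` = sum of `T` over the cube slab `{c j = v}`. -/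
def W (j : Fin n) (v : Fin 3) : ℝ := ∑ c ∈ slabF j v, TT p f (eps3 m c)

lemma W_nonneg (j : Fin n) (v : Fin 3) : 0 ≤ W p f j v :=
  Finset.sum_nonneg fun _ _ => TT_nonneg p f _

lemma chain1 (hp : 1 ≤ p) (hn : 1 ≤ n) (j : Fin n) :
    (3:ℝ)^(n-1) * TT p f (Pi.single j 1) ≤ 2^(p-1) * (W p f j 1 + W p f j 2) := by
  have key : ∀ c ∈ slabF j 2, TT p f (Pi.single j 1)
      ≤ 2^(p-1) * (TT p f (eps3 m (flipj j c)) + TT p f (eps3 m c)) := by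
    intro c hc
    have h1 := TT_sub_add p f hp (Pi.single j 1) (eps3 m c)
    rwa [eps3_single_sub_two (mem_slabF.1 hc)] at h1
  have hsum := Finset.sum_le_sum key
  rw [Finset.sum_const, slab_card hn j 2, nsmul_eq_mul] at hsum
  push_cast at hsum
  refine hsum.trans (le_of_eq ?_)
  rw [← Finset.mul_sum, Finset.sum_add_distrib]
  congr 2
  · refine Finset.sum_nbij' (flipj j) (flipjw j 2) ?_ ?_ ?_ ?_ ?_
    · intro c _; exact flipj_mem_slab c
    · intro c _; simp [mem_slabF, flipjw]
    · intro c hc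
      funext i
      by_cases h : i = j
      · subst h; simp [flipj, flipjw, (mem_slabF.1 hc).symm]
      · simp [flipj, flipjw, h, flip3_flip3]
    · intro c hc
      funext i
      by_cases h : i = j
      · subst h; simp [flipj, flipjw, (mem_slabF.1 hc).symm]
      · simp [flipj, flipjw, h, flip3_flip3]
    · intro c _; rfl

lemma chain2 (hp : 1 ≤ p) (hn : 1 ≤ n) (j : Fin n) :
    (3:ℝ)^(n-1) * TT p f (Pi.single j 1) ≤ 2^(p-1) * (W p f j 1 + W p f j 0) := by
  rw [← TT_neg p f (Pi.single j 1)]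
  have key : ∀ c ∈ slabF j 0, TT p f (-Pi.single j 1)
      ≤ 2^(p-1) * (TT p f (eps3 m (flipj j c)) + TT p f (eps3 m c)) := by
    intro c hc
    have h1 := TT_sub_add p f hp (-Pi.single j 1) (eps3 m c)
    rwa [eps3_neg_single_sub_zero (mem_slabF.1 hc)] at h1
  have hsum := Finset.sum_le_sum key
  rw [Finset.sum_const, slab_card hn j 0, nsmul_eq_mul] at hsum
  push_cast at hsum
  refine hsum.trans (le_of_eq ?_)
  rw [← Finset.mul_sum, Finset.sum_add_distrib]
  congr 2
  · refine Finset.sum_nbij' (flipj j) (flipjw j 0) ?_ ?_ ?_ ?_ ?_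
    · intro c _; exact flipj_mem_slab c
    · intro c _; simp [mem_slabF, flipjw]
    · intro c hc
      funext i
      by_cases h : i = j
      · subst h; simp [flipj, flipjw, (mem_slabF.1 hc).symm]
      · simp [flipj, flipjw, h, flip3_flip3]
    · intro c hc
      funext i
      by_cases h : i = j
      · subst h; simp [flipj, flipjw, (mem_slabF.1 hc).symm]
      · simp [flipj, flipjw, h, flip3_flip3]
    · intro c _; rfl

/-- the two splitting maps on codes, away from coordinate `j`. -/
def Pmap (j : Fin n) (c : Fin n → Fin 3) (b : Fin n → Bool) : Fin n → Fin 3 :=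
  fun i => if i = j then 2 else pcode (c i) (b i)
def Mmap (j : Fin n) (c : Fin n → Fin 3) (b : Fin n → Bool) : Fin n → Fin 3 :=
  fun i => if i = j then 0 else mcode (c i) (b i)

lemma eps3_split {j : Fin n} {c : Fin n → Fin 3} (hc : c j = 1) (b : Fin n → Bool) :
    eps3 m c = eps3 m (Pmap j c b) + eps3 m (Mmap j c b) := by
  funext i
  show ((((c i : ℕ) : ℤ) - 1 : ℤ) : ZMod m) = _
  by_cases h : i = j
  · subst h
    simp only [Pi.add_apply, eps3, Pmap, Mmap, if_pos rfl, hc, eq_self_iff_true, if_true]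
    rw [show ((((1 : Fin 3) : ℕ) : ℤ) - 1 : ℤ) = 0 by decide,
      show ((((2 : Fin 3) : ℕ) : ℤ) - 1 : ℤ) = 1 by decide,
      show ((((0 : Fin 3) : ℕ) : ℤ) - 1 : ℤ) = -1 by decide]
    push_cast; ring
  · simp only [Pi.add_apply, eps3, Pmap, Mmap, if_neg h]
    rw [← Int.cast_add, pm_int (c i) (b i)]

lemma chain3 (hp : 1 ≤ p) (j : Fin n) :
    W p f j 1 ≤ 2^(p-1) * (W p f j 0 + W p f j 2) := by
  have key : ∀ x ∈ (slabF j 1) ×ˢ (univ : Finset (Fin n → Bool)),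
      TT p f (eps3 m x.1) ≤ 2^(p-1) * (TT p f (eps3 m (Pmap j x.1 x.2))
        + TT p f (eps3 m (Mmap j x.1 x.2))) := by
    rintro ⟨c, b⟩ hx
    rw [Finset.mem_product] at hx
    have hc := mem_slabF.1 hx.1
    rw [eps3_split hc b]
    exact TT_add_le p f hp _ _
  have hsum := Finset.sum_le_sum key
  have hL : ∑ x ∈ (slabF j 1) ×ˢ (univ : Finset (Fin n → Bool)), TT p f (eps3 m x.1)
      = 2^n * W p f j 1 := by
    rw [Finset.sum_product]
    simp only [Finset.sum_const, Finset.card_univ, Fintype.card_fun, Fintype.card_fin,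
      Fintype.card_bool, nsmul_eq_mul, W]
    rw [← Finset.mul_sum]
    push_cast
    ring
  have hP : ∑ x ∈ (slabF j 1) ×ˢ (univ : Finset (Fin n → Bool)),
      TT p f (eps3 m (Pmap j x.1 x.2)) = 2^n * W p f j 2 := by
    have : ∑ x ∈ (slabF j 1) ×ˢ (univ : Finset (Fin n → Bool)),
        TT p f (eps3 m (Pmap j x.1 x.2))
        = ∑ y ∈ (slabF j 2) ×ˢ (univ : Finset (Fin n → Bool)), TT p f (eps3 m y.1) := by
      refine Finset.sum_nbij'
        (fun x => (Pmap j x.1 x.2, fun i' => if i' = j then x.2 i' else paux (x.1 i') (x.2 i')))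
        (fun y => (fun i' => if i' = j then 1 else pinvC (y.1 i') (y.2 i'),
          fun i' => if i' = j then y.2 i' else pinvB (y.1 i') (y.2 i'))) ?_ ?_ ?_ ?_ ?_
      · rintro ⟨c, b⟩ _
        refine Finset.mem_product.2 ⟨?_, mem_univ _⟩
        simp [mem_slabF, Pmap]
      · rintro ⟨c, b⟩ _
        refine Finset.mem_product.2 ⟨?_, mem_univ _⟩
        simp [mem_slabF]
      · rintro ⟨c, b⟩ hx
        rw [Finset.mem_product] at hx
        have hc := mem_slabF.1 hx.1
        refine Prod.ext ?_ ?_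
        · funext i'
          by_cases h : i' = j
          · subst h; simpa [Pmap] using hc.symm
          · simp only [Pmap, if_neg h]
            exact (p_roundtrip1 (c i') (b i')).1
        · funext i'
          by_cases h : i' = j
          · subst h; simp
          · simp only [Pmap, if_neg h]
            exact (p_roundtrip1 (c i') (b i')).2
      · rintro ⟨c, b⟩ hy
        rw [Finset.mem_product] at hy
        have hc := mem_slabF.1 hy.1
        refine Prod.ext ?_ ?_
        · funext i'
          by_cases h : i' = j
          · subst h; simpa [Pmap] using hc.symm
          · simp only [Pmap, if_neg h]
            exact (p_roundtrip2 (c i') (b i')).1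
        · funext i'
          by_cases h : i' = j
          · subst h; simp
          · simp only [Pmap, if_neg h]
            exact (p_roundtrip2 (c i') (b i')).2
      · rintro ⟨c, b⟩ _; rfl
    rw [this, Finset.sum_product]
    simp only [Finset.sum_const, Finset.card_univ, Fintype.card_fun, Fintype.card_fin,
      Fintype.card_bool, nsmul_eq_mul, W]
    rw [← Finset.mul_sum]
    push_cast
    ring
  have hM : ∑ x ∈ (slabF j 1) ×ˢ (univ : Finset (Fin n → Bool)),
      TT p f (eps3 m (Mmap j x.1 x.2)) = 2^n * W p f j 0 := by
    have : ∑ x ∈ (slabF j 1) ×ˢ (univ : Finset (Fin n → Bool)),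
        TT p f (eps3 m (Mmap j x.1 x.2))
        = ∑ y ∈ (slabF j 0) ×ˢ (univ : Finset (Fin n → Bool)), TT p f (eps3 m y.1) := by
      refine Finset.sum_nbij'
        (fun x => (Mmap j x.1 x.2, fun i' => if i' = j then x.2 i' else maux (x.1 i') (x.2 i')))
        (fun y => (fun i' => if i' = j then 1 else minvC (y.1 i') (y.2 i'),
          fun i' => if i' = j then y.2 i' else minvB (y.1 i') (y.2 i'))) ?_ ?_ ?_ ?_ ?_
      · rintro ⟨c, b⟩ _
        refine Finset.mem_product.2 ⟨?_, mem_univ _⟩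
        simp [mem_slabF, Mmap]
      · rintro ⟨c, b⟩ _
        refine Finset.mem_product.2 ⟨?_, mem_univ _⟩
        simp [mem_slabF]
      · rintro ⟨c, b⟩ hx
        rw [Finset.mem_product] at hx
        have hc := mem_slabF.1 hx.1
        refine Prod.ext ?_ ?_
        · funext i'
          by_cases h : i' = j
          · subst h; simpa [Mmap] using hc.symm
          · simp only [Mmap, if_neg h]
            exact (m_roundtrip1 (c i') (b i')).1
        · funext i'
          by_cases h : i' = j
          · subst h; simp
          · simp only [Mmap, if_neg h]
            exact (m_roundtrip1 (c i') (b i')).2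
      · rintro ⟨c, b⟩ hy
        rw [Finset.mem_product] at hy
        have hc := mem_slabF.1 hy.1
        refine Prod.ext ?_ ?_
        · funext i'
          by_cases h : i' = j
          · subst h; simpa [Mmap] using hc.symm
          · simp only [Mmap, if_neg h]
            exact (m_roundtrip2 (c i') (b i')).1
        · funext i'
          by_cases h : i' = j
          · subst h; simp
          · simp only [Mmap, if_neg h]
            exact (m_roundtrip2 (c i') (b i')).2
      · rintro ⟨c, b⟩ _; rfl
    rw [this, Finset.sum_product]
    simp only [Finset.sum_const, Finset.card_univ, Fintype.card_fun, Fintype.card_fin,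
      Fintype.card_bool, nsmul_eq_mul, W]
    rw [← Finset.mul_sum]
    push_cast
    ring
  rw [hL] at hsum
  have hR : ∑ x ∈ (slabF j 1) ×ˢ (univ : Finset (Fin n → Bool)),
      2^(p-1) * (TT p f (eps3 m (Pmap j x.1 x.2)) + TT p f (eps3 m (Mmap j x.1 x.2)))
      = 2^n * (2^(p-1) * (W p f j 0 + W p f j 2)) := by
    rw [← Finset.mul_sum, Finset.sum_add_distrib, hP, hM]
    ring
  rw [hR] at hsum
  have h2n : (0:ℝ) < 2^n := by positivity
  exact (mul_le_mul_iff_right₀ h2n).1 hsum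

lemma one_le_u (hp : 1 ≤ p) : (1:ℝ) ≤ 2^(p-1) := by
  have := Real.rpow_le_rpow_of_exponent_le (one_le_two (α := ℝ)) (by linarith : (0:ℝ) ≤ p - 1)
  rwa [Real.rpow_zero] at this

lemma crux_j (hp : 1 ≤ p) (hn : 1 ≤ n) (j : Fin n) :
    2 * (3:ℝ)^(n-1) * TT p f (Pi.single j 1)
      ≤ (3/2 * 2^(p-1)) * W p f j 1
        + (2^(p-1) + 2^(p-1) * 2^(p-1) / 2) * (W p f j 0 + W p f j 2) := by
  have c1 := chain1 p f hp hn j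
  have c2 := chain2 p f hp hn j
  have c3 := chain3 p f hp j
  have hu : (0:ℝ) ≤ 2^(p-1) := by positivity
  have hc3' : (2^(p-1)/2) * W p f j 1 ≤ (2^(p-1)/2) * (2^(p-1) * (W p f j 0 + W p f j 2)) :=
    mul_le_mul_of_nonneg_left c3 (by positivity)
  nlinarith [c1, c2, hc3']

lemma sumWv (v : Fin 3) : ∑ j, W p f j v
    = ∑ c : Fin n → Fin 3, ((univ.filter fun j => c j = v).card : ℝ) * TT p f (eps3 m c) := by
  simp only [W, slabF, Finset.sum_filter]
  rw [Finset.sum_comm]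
  exact Finset.sum_congr rfl fun c _ => by
    rw [← Finset.sum_filter, Finset.sum_const, nsmul_eq_mul]

lemma count_three (c : Fin n → Fin 3) :
    (univ.filter fun j => c j = 0).card + (univ.filter fun j => c j = 1).card
      + (univ.filter fun j => c j = 2).card = n := by
  have := Finset.card_eq_sum_card_fiberwise
    (f := fun j : Fin n => c j) (s := univ) (t := univ) (fun x _ => mem_univ _)
  rw [card_univ, Fintype.card_fin, Fin.sum_univ_three] at this
  beta_reduce at this
  omega

/-- the crux estimate: `2·3^{n-1} ∑_j T(e_j) ≤ 2·a·n·Q`. -/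
lemma crux_sum (hp : 1 ≤ p) (hn : 1 ≤ n) :
    2 * (3:ℝ)^(n-1) * ∑ j : Fin n, TT p f (Pi.single j 1)
      ≤ (2^(p-1) + 2^(p-1) * 2^(p-1) / 2) * n
          * ∑ c : Fin n → Fin 3, TT p f (eps3 m c) := by
  set K : ℝ := 2^(p-1) + 2^(p-1) * 2^(p-1) / 2 with hK
  set b : ℝ := 3/2 * 2^(p-1) with hbdef
  have hsum := Finset.sum_le_sum (fun j (_ : j ∈ (univ : Finset (Fin n))) => crux_j p f hp hn j)
  rw [← Finset.mul_sum] at hsum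
  refine hsum.trans ?_
  have hb : b ≤ K := by
    have h1 := one_le_u p hp
    rw [hbdef, hK]
    nlinarith [h1]
  have hKpos : 0 ≤ K := by rw [hK]; positivity
  have eL : ∑ i : Fin n, (b * W p f i 1 + K * (W p f i 0 + W p f i 2))
      = b * (∑ i : Fin n, W p f i 1)
        + K * ((∑ i : Fin n, W p f i 0) + (∑ i : Fin n, W p f i 2)) := by
    rw [Finset.sum_add_distrib, ← Finset.mul_sum, ← Finset.mul_sum, Finset.sum_add_distrib]
  rw [eL, sumWv p f 0, sumWv p f 1, sumWv p f 2]
  have hA1nn : (0:ℝ) ≤ ∑ c : Fin n → Fin 3,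
      ((univ.filter fun j => c j = 1).card : ℝ) * TT p f (eps3 m c) :=
    Finset.sum_nonneg fun c _ => mul_nonneg (by positivity) (TT_nonneg p f _)
  have h1 : b * (∑ c : Fin n → Fin 3,
        ((univ.filter fun j => c j = 1).card : ℝ) * TT p f (eps3 m c))
      ≤ K * (∑ c : Fin n → Fin 3,
        ((univ.filter fun j => c j = 1).card : ℝ) * TT p f (eps3 m c)) :=
    mul_le_mul_of_nonneg_right hb hA1nn
  have h2 : K * (∑ c : Fin n → Fin 3,
        ((univ.filter fun j => c j = 1).card : ℝ) * TT p f (eps3 m c))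
      + K * ((∑ c : Fin n → Fin 3,
          ((univ.filter fun j => c j = 0).card : ℝ) * TT p f (eps3 m c))
        + (∑ c : Fin n → Fin 3,
          ((univ.filter fun j => c j = 2).card : ℝ) * TT p f (eps3 m c)))
      = K * n * ∑ c : Fin n → Fin 3, TT p f (eps3 m c) := by
    rw [← mul_add, ← add_assoc, ← Finset.sum_add_distrib, ← Finset.sum_add_distrib]
    rw [mul_assoc]
    congr 1
    rw [Finset.mul_sum]
    refine Finset.sum_congr rfl fun c _ => ?_
    have hcnt := count_three c
    have hval : ((univ.filter fun j => c j = 1).card : ℝ)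
        + ((univ.filter fun j => c j = 0).card : ℝ)
          + ((univ.filter fun j => c j = 2).card : ℝ) = (n : ℝ) := by
      push_cast [← hcnt]; ring
    rw [← add_mul, ← add_mul, hval]

  linarith [h1, h2.le, h2.ge]

end Chains

lemma exp85 : Real.exp (8/5) ≤ 5 := by
  have h8 : Real.exp 8 < 3125 := by
    have h1 : Real.exp 8 = Real.exp 1 ^ (8:ℕ) := by
      rw [← Real.exp_nat_mul]; norm_num
    have h2 : Real.exp 1 ^ (8:ℕ) < 2.7182818286 ^ (8:ℕ) :=
      pow_lt_pow_left₀ Real.exp_one_lt_d9 (le_of_lt (Real.exp_pos 1)) (by norm_num)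
    have h3 : (2.7182818286:ℝ) ^ (8:ℕ) < 3125 := by norm_num
    linarith [h1 ▸ h2]
  have h5 : Real.exp (8/5) ^ (5:ℕ) = Real.exp 8 := by
    rw [← Real.exp_nat_mul]; norm_num
  by_contra hcon
  push_neg at hcon
  have := pow_lt_pow_left₀ hcon (by norm_num : (0:ℝ) ≤ 5) (by norm_num : (5:ℕ) ≠ 0)
  rw [h5] at this
  norm_num at this
  linarith

lemma log5_ge : (8/5 : ℝ) ≤ Real.log 5 := by
  rw [Real.le_log_iff_exp_le (by norm_num : (0:ℝ) < 5)]
  exact exp85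

lemma rpow_le_one_add {c : ℝ} (hc : 1 ≤ c) {x : ℝ} (hx0 : 0 ≤ x) (hx1 : x ≤ 1) :
    (c:ℝ) ^ x ≤ 1 + (c - 1) * x := by
  have hc0 : (0:ℝ) < c := by linarith
  have hconv := convexOn_exp.2 (Set.mem_univ (Real.log c)) (Set.mem_univ (0:ℝ))
    hx0 (by linarith : (0:ℝ) ≤ 1 - x) (by ring)
  simp only [smul_eq_mul, mul_zero, add_zero, Real.exp_zero] at hconv
  rw [Real.exp_log hc0] at hconv
  rw [Real.rpow_def_of_pos hc0, mul_comm]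
  calc Real.exp (x * Real.log c) ≤ x * c + (1 - x) * 1 := hconv
    _ = 1 + (c - 1) * x := by ring

lemma five_rpow_ge {x : ℝ} (hx0 : 0 ≤ x) : 1 + (8/5) * x ≤ (5:ℝ) ^ x := by
  have h1 : x * Real.log 5 + 1 ≤ Real.exp (x * Real.log 5) := Real.add_one_le_exp _
  have h2 : (8/5) * x ≤ x * Real.log 5 := by
    rw [mul_comm]
    exact mul_le_mul_of_nonneg_left log5_ge hx0
  rw [Real.rpow_def_of_pos (by norm_num : (0:ℝ) < 5)]
  rw [mul_comm x (Real.log 5)] at h1 h2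
  linarith

lemma scal {p : ℝ} (hp : 1 ≤ p) :
    1 + 3/2 * ((2:ℝ)^(p-1) + (2:ℝ)^(p-1) * (2:ℝ)^(p-1) / 2) ≤ 2/3 * (5:ℝ)^p := by
  have hu4 : (2:ℝ)^(p-1) * (2:ℝ)^(p-1) = (4:ℝ)^(p-1) := by
    rw [show (4:ℝ) = 2 * 2 by norm_num, Real.mul_rpow (by norm_num) (by norm_num)]
  rw [hu4]
  rcases le_or_gt p 2 with h2 | h2
  · set x := p - 1 with hx
    have hx0 : (0:ℝ) ≤ x := by simp only [hx]; linarith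
    have hx1 : x ≤ 1 := by simp only [hx]; linarith
    have h2x : (2:ℝ)^x ≤ 1 + x := by
      have := rpow_le_one_add (c := 2) (by norm_num) hx0 hx1
      norm_num at this; linarith
    have h4x : (4:ℝ)^x ≤ 1 + 3*x := by
      have := rpow_le_one_add (c := 4) (by norm_num) hx0 hx1
      norm_num at this; linarith
    have h5p : (5:ℝ)^p = 5 * 5^x := by
      rw [show p = 1 + x by simp [hx], Real.rpow_add (by norm_num : (0:ℝ) < 5),
        Real.rpow_one]
    have h5x := five_rpow_ge hx0
    rw [h5p]
    nlinarith
  · -- p ≥ 2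
    have hp0 : (0:ℝ) ≤ p := by linarith
    have h2p4 : (4:ℝ) ≤ 2^p := by
      have := Real.rpow_le_rpow_of_exponent_le (one_le_two (α := ℝ)) h2.le
      rwa [show ((2:ℝ)^(2:ℝ)) = 4 by
        rw [show (2:ℝ) = ((2:ℕ):ℝ) by norm_num, Real.rpow_natCast]; norm_num] at this
    have h4p16 : (16:ℝ) ≤ 4^p := by
      have := Real.rpow_le_rpow_of_exponent_le (by norm_num : (1:ℝ) ≤ 4) h2.le
      rwa [show ((4:ℝ)^(2:ℝ)) = 16 by
        rw [show (2:ℝ) = ((2:ℕ):ℝ) by norm_num, Real.rpow_natCast]; norm_num] at this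
    have hu2 : (2:ℝ)^(p-1) = 2^p / 2 := by
      rw [Real.rpow_sub (by norm_num : (0:ℝ) < 2), Real.rpow_one]
    have hu4' : (4:ℝ)^(p-1) = 4^p / 4 := by
      rw [Real.rpow_sub (by norm_num : (0:ℝ) < 4), Real.rpow_one]
    have h44 : (4:ℝ)^p = 2^p * 2^p := by
      rw [show (4:ℝ) = 2 * 2 by norm_num, Real.mul_rpow (by norm_num) (by norm_num)]
    have h45 : (4:ℝ)^p ≤ 5^p := by
      have h1 : ((4:ℝ)/5)^p ≤ 1 := by
        apply Real.rpow_le_one (by norm_num) (by norm_num) hp0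
      have h2' : ((4:ℝ)/5)^p = 4^p / 5^p := Real.div_rpow (by norm_num) (by norm_num) p
      have h5pos : (0:ℝ) < 5^p := Real.rpow_pos_of_pos (by norm_num) p
      rw [h2', div_le_one h5pos] at h1
      exact h1
    have h2pos : (0:ℝ) < 2^p := Real.rpow_pos_of_pos (by norm_num) p
    rw [hu2, hu4']
    nlinarith [h44, h2p4, h45, h4p16, h2pos]
section Glue
variable {M : Type*} [MetricSpace M] {m n : ℕ} [NeZero m] (p : ℝ)
  (f : (Fin n → ZMod m) → M) (A : Finset (Fin n))

/-- glue a function on `A`-coordinates with outside values `y`. -/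
def glue (y : Fin n → ZMod m) (w : Fin A.card → ZMod m) : Fin n → ZMod m :=
  fun i => if h : i ∈ A then w (A.equivFin ⟨i, h⟩) else y i

/-- extend a vector on `A`-coordinates by `0`. -/
def iota (v : Fin A.card → ZMod m) : Fin n → ZMod m :=
  fun i => if h : i ∈ A then v (A.equivFin ⟨i, h⟩) else 0

lemma glue_add (y : Fin n → ZMod m) (w v : Fin A.card → ZMod m) :
    glue A y (w + v) = glue A y w + iota A v := by
  funext i
  by_cases h : i ∈ A
  · simp [glue, iota, h]
  · simp [glue, iota, h]

lemma iota_single (j : Fin A.card) (c : ZMod m) :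
    iota A (Pi.single j c) = Pi.single (M := fun _ : Fin n => ZMod m) (A.equivFin.symm j).1 c := by
  funext i
  by_cases h : i ∈ A
  · rw [iota, dif_pos h, Pi.single_apply, Pi.single_apply]
    congr 1
    rw [eq_iff_iff]
    constructor
    · intro he
      have : (⟨i, h⟩ : {x // x ∈ A}) = A.equivFin.symm j := by
        rw [← he, Equiv.symm_apply_apply]
      exact congrArg Subtype.val this
    · intro he
      have : (⟨i, h⟩ : {x // x ∈ A}) = A.equivFin.symm j := Subtype.ext he
      rw [this, Equiv.apply_symm_apply]
  · rw [iota, dif_neg h, Pi.single_eq_of_ne]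
    intro he
    exact h (he ▸ (A.equivFin.symm j).2)

/-- the double-counting involution. -/
def Psi : (Fin n → ZMod m) × (Fin A.card → ZMod m)
    ≃ (Fin n → ZMod m) × (Fin A.card → ZMod m) where
  toFun yw := (glue A yw.1 yw.2, fun k => yw.1 ↑(A.equivFin.symm k))
  invFun yw := (glue A yw.1 yw.2, fun k => yw.1 ↑(A.equivFin.symm k))
  left_inv := by
    rintro ⟨y, w⟩
    refine Prod.ext ?_ ?_
    · show glue A (glue A y w) _ = y
      funext i
      by_cases h : i ∈ A
      · rw [glue, dif_pos h]
        show y ↑(A.equivFin.symm (A.equivFin ⟨i, h⟩)) = y i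
        simp only [Equiv.symm_apply_apply]
      · rw [glue, dif_neg h]
        show glue A y w i = y i
        rw [glue, dif_neg h]
    · show (fun k => (glue A y w) ↑(A.equivFin.symm k)) = w
      funext k
      have hk : ↑(A.equivFin.symm k) ∈ A := (A.equivFin.symm k).2
      show glue A y w ↑(A.equivFin.symm k) = w k
      rw [glue, dif_pos hk]
      congr 1
      rw [Subtype.coe_eta, Equiv.apply_symm_apply]
  right_inv := by
    rintro ⟨y, w⟩
    refine Prod.ext ?_ ?_
    · show glue A (glue A y w) _ = y
      funext i
      by_cases h : i ∈ A
      · rw [glue, dif_pos h]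
        show y ↑(A.equivFin.symm (A.equivFin ⟨i, h⟩)) = y i
        simp only [Equiv.symm_apply_apply]
      · rw [glue, dif_neg h]
        show glue A y w i = y i
        rw [glue, dif_neg h]
    · show (fun k => (glue A y w) ↑(A.equivFin.symm k)) = w
      funext k
      have hk : ↑(A.equivFin.symm k) ∈ A := (A.equivFin.symm k).2
      show glue A y w ↑(A.equivFin.symm k) = w k
      rw [glue, dif_pos hk]
      congr 1
      rw [Subtype.coe_eta, Equiv.apply_symm_apply]

lemma sum_glue (H : (Fin n → ZMod m) → ℝ) :
    ∑ y : Fin n → ZMod m, ∑ w : Fin A.card → ZMod m, H (glue A y w)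
      = (m:ℝ)^A.card * ∑ x : Fin n → ZMod m, H x := by
  have h1 : ∑ yw : (Fin n → ZMod m) × (Fin A.card → ZMod m), H (glue A yw.1 yw.2)
      = ∑ y : Fin n → ZMod m, ∑ w : Fin A.card → ZMod m, H (glue A y w) :=
    Fintype.sum_prod_type _
  rw [← h1]
  rw [Fintype.sum_equiv (Psi A) (fun yw => H (glue A yw.1 yw.2)) (fun xu => H xu.1)
    (fun yw => rfl)]
  have h2 : ∑ xu : (Fin n → ZMod m) × (Fin A.card → ZMod m), H xu.1
      = ∑ x : Fin n → ZMod m, ∑ _u : Fin A.card → ZMod m, H x :=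
    Fintype.sum_prod_type _
  rw [h2]
  have : ∀ x : Fin n → ZMod m, ∑ _u : Fin A.card → ZMod m, H x = (m:ℝ)^A.card * H x := by
    intro x
    rw [Finset.sum_const, nsmul_eq_mul, Finset.card_univ, Fintype.card_fun,
      ZMod.card, Fintype.card_fin]
    push_cast
    ring
  rw [Finset.sum_congr rfl fun x _ => this x, ← Finset.mul_sum]

/-- the `Fin m → ZMod m` equivalence. -/
def finZEquiv : Fin m ≃ ZMod m where
  toFun i := ((i : ℕ) : ZMod m)
  invFun z := ⟨z.val, ZMod.val_lt z⟩
  left_inv i := by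
    ext
    exact ZMod.val_cast_of_lt i.isLt
  right_inv z := ZMod.natCast_rightInverse z

lemma sum_toZMod {k : ℕ} (H : (Fin k → ZMod m) → ℝ) :
    ∑ x : Fin k → Fin m, H (toZMod x) = ∑ x : Fin k → ZMod m, H x :=
  Fintype.sum_equiv (Equiv.piCongrRight fun _ => finZEquiv) _ _ (fun _ => rfl)

lemma sum_glue_dist (hp : 1 ≤ p) (u : Fin A.card → ZMod m) :
    ∑ y : Fin n → ZMod m, ∑ x : Fin A.card → Fin m,
      dist (f (glue A y (toZMod x + u))) (f (glue A y (toZMod x))) ^ p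
    = (m:ℝ)^A.card * TT p f (iota A u) := by
  have e1 : ∀ y : Fin n → ZMod m, ∑ x : Fin A.card → Fin m,
      dist (f (glue A y (toZMod x + u))) (f (glue A y (toZMod x))) ^ p
      = ∑ w : Fin A.card → ZMod m, dist (f (glue A y w + iota A u)) (f (glue A y w)) ^ p := by
    intro y
    rw [sum_toZMod (fun w => dist (f (glue A y (w + u))) (f (glue A y w)) ^ p)]
    exact Finset.sum_congr rfl fun w _ => by rw [glue_add]
  rw [Finset.sum_congr rfl fun y _ => e1 y]
  exact sum_glue A (fun x => dist (f (x + iota A u)) (f x) ^ p)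

lemma inst_A (hp : 1 ≤ p) (q C : ℝ)
    (h : ∀ ℓ : ℕ, 1 ≤ ℓ → ℓ ≤ n → ∀ g : (Fin ℓ → ZMod m) → M,
      ∑ j : Fin ℓ, ∑ x : Fin ℓ → Fin m,
          dist (g (toZMod x + Pi.single j ((m / 2 : ℕ) : ZMod m))) (g (toZMod x)) ^ p
        ≤ C ^ p * (m:ℝ) ^ p * (n:ℝ) ^ (1 - p / q) *
            (((2 : ℝ) ^ ℓ)⁻¹ * ∑ ε : Fin ℓ → Bool, ∑ x : Fin ℓ → Fin m,
                dist (g (toZMod x + epsPM m ε)) (g (toZMod x)) ^ p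
              + (ℓ : ℝ)⁻¹ * ∑ j : Fin ℓ, ∑ x : Fin ℓ → Fin m,
                  dist (g (toZMod x + Pi.single j (1 : ZMod m))) (g (toZMod x)) ^ p))
    (hA : A.Nonempty) :
    (2:ℝ)^A.card * ∑ i ∈ A, TT p f (Pi.single i ((m / 2 : ℕ) : ZMod m))
      ≤ C ^ p * (m:ℝ) ^ p * (n:ℝ) ^ (1 - p / q) *
          ((∑ ε : Fin A.card → Bool, TT p f (iota A (epsPM m ε)))
            + ((2:ℝ)^A.card / A.card) * ∑ i ∈ A, TT p f (Pi.single i (1 : ZMod m))) := by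
  have hl1 : 1 ≤ A.card := hA.card_pos
  have hln : A.card ≤ n := by simpa using A.card_le_univ
  have hy := fun y : Fin n → ZMod m => h A.card hl1 hln (fun w => f (glue A y w))
  have hsum := Finset.sum_le_sum
    (fun y (_ : y ∈ (univ : Finset (Fin n → ZMod m))) => hy y)
  -- evaluate the LHS of hsum
  have hL : ∑ y : Fin n → ZMod m, ∑ j : Fin A.card, ∑ x : Fin A.card → Fin m,
      dist (f (glue A y (toZMod x + Pi.single j ((m / 2 : ℕ) : ZMod m))))
        (f (glue A y (toZMod x))) ^ p
      = (m:ℝ)^A.card * ∑ i ∈ A, TT p f (Pi.single i ((m / 2 : ℕ) : ZMod m)) := by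
    rw [Finset.sum_comm]
    have e1 : ∀ j : Fin A.card, ∑ y : Fin n → ZMod m, ∑ x : Fin A.card → Fin m,
        dist (f (glue A y (toZMod x + Pi.single j ((m / 2 : ℕ) : ZMod m))))
          (f (glue A y (toZMod x))) ^ p
        = (m:ℝ)^A.card
            * TT p f (Pi.single (M := fun _ : Fin n => ZMod m) (A.equivFin.symm j).1
                ((m / 2 : ℕ) : ZMod m)) := by
      intro j
      rw [sum_glue_dist p f A hp (Pi.single j ((m / 2 : ℕ) : ZMod m)), iota_single]
    rw [Finset.sum_congr rfl (fun j _ => e1 j), ← Finset.mul_sum]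
    congr 1
    rw [← Finset.sum_coe_sort A
      (fun i => TT p f (Pi.single (M := fun _ : Fin n => ZMod m) i ((m / 2 : ℕ) : ZMod m)))]
    exact Equiv.sum_comp A.equivFin.symm
      (fun a => TT p f (Pi.single (M := fun _ : Fin n => ZMod m) a.1 ((m / 2 : ℕ) : ZMod m)))
  have hD : ∑ y : Fin n → ZMod m, ∑ j : Fin A.card, ∑ x : Fin A.card → Fin m,
      dist (f (glue A y (toZMod x + Pi.single j (1 : ZMod m))))
        (f (glue A y (toZMod x))) ^ p
      = (m:ℝ)^A.card * ∑ i ∈ A, TT p f (Pi.single i (1 : ZMod m)) := by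
    rw [Finset.sum_comm]
    have e1 : ∀ j : Fin A.card, ∑ y : Fin n → ZMod m, ∑ x : Fin A.card → Fin m,
        dist (f (glue A y (toZMod x + Pi.single j (1 : ZMod m))))
          (f (glue A y (toZMod x))) ^ p
        = (m:ℝ)^A.card
            * TT p f (Pi.single (M := fun _ : Fin n => ZMod m) (A.equivFin.symm j).1
                (1 : ZMod m)) := by
      intro j
      rw [sum_glue_dist p f A hp (Pi.single j (1 : ZMod m)), iota_single]
    rw [Finset.sum_congr rfl (fun j _ => e1 j), ← Finset.mul_sum]
    congr 1
    rw [← Finset.sum_coe_sort A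
      (fun i => TT p f (Pi.single (M := fun _ : Fin n => ZMod m) i (1 : ZMod m)))]
    exact Equiv.sum_comp A.equivFin.symm
      (fun a => TT p f (Pi.single (M := fun _ : Fin n => ZMod m) a.1 (1 : ZMod m)))
  have hE : ∑ y : Fin n → ZMod m, ∑ ε : Fin A.card → Bool, ∑ x : Fin A.card → Fin m,
      dist (f (glue A y (toZMod x + epsPM m ε))) (f (glue A y (toZMod x))) ^ p
      = (m:ℝ)^A.card * ∑ ε : Fin A.card → Bool, TT p f (iota A (epsPM m ε)) := by
    rw [Finset.sum_comm]
    rw [Finset.sum_congr rfl (fun ε _ => sum_glue_dist p f A hp (epsPM m ε)),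
      ← Finset.mul_sum]
  -- rewrite hsum
  rw [hL] at hsum
  have hRHS : ∑ _y : Fin n → ZMod m, C ^ p * (m:ℝ) ^ p * (n:ℝ) ^ (1 - p / q) *
      (((2 : ℝ) ^ A.card)⁻¹ * ∑ ε : Fin A.card → Bool, ∑ x : Fin A.card → Fin m,
          dist (f (glue A _y (toZMod x + epsPM m ε))) (f (glue A _y (toZMod x))) ^ p
        + ((A.card : ℝ))⁻¹ * ∑ j : Fin A.card, ∑ x : Fin A.card → Fin m,
          dist (f (glue A _y (toZMod x + Pi.single j (1 : ZMod m))))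
            (f (glue A _y (toZMod x))) ^ p)
      = C ^ p * (m:ℝ) ^ p * (n:ℝ) ^ (1 - p / q) *
        (((2 : ℝ) ^ A.card)⁻¹ * ((m:ℝ)^A.card * ∑ ε : Fin A.card → Bool,
            TT p f (iota A (epsPM m ε)))
          + ((A.card : ℝ))⁻¹ * ((m:ℝ)^A.card * ∑ i ∈ A, TT p f (Pi.single i (1 : ZMod m)))) := by
    rw [← Finset.mul_sum, Finset.sum_add_distrib, ← Finset.mul_sum, ← Finset.mul_sum]
    rw [hE, hD]
  rw [hRHS] at hsum
  -- divide by m^card, multiply by 2^card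
  have hm : (0:ℝ) < (m:ℝ)^A.card := by
    have hm0 : 0 < m := Nat.pos_of_ne_zero (NeZero.ne m)
    positivity
  have step : ∑ i ∈ A, TT p f (Pi.single i ((m / 2 : ℕ) : ZMod m))
      ≤ C ^ p * (m:ℝ) ^ p * (n:ℝ) ^ (1 - p / q) *
        (((2 : ℝ) ^ A.card)⁻¹ * (∑ ε : Fin A.card → Bool, TT p f (iota A (epsPM m ε)))
          + ((A.card : ℝ))⁻¹ * ∑ i ∈ A, TT p f (Pi.single i (1 : ZMod m))) := by
    refine (mul_le_mul_iff_right₀ hm).1 ?_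
    calc (m:ℝ)^A.card * ∑ i ∈ A, TT p f (Pi.single i ((m / 2 : ℕ) : ZMod m))
        ≤ C ^ p * (m:ℝ) ^ p * (n:ℝ) ^ (1 - p / q) *
          (((2 : ℝ) ^ A.card)⁻¹ * ((m:ℝ)^A.card * ∑ ε : Fin A.card → Bool,
              TT p f (iota A (epsPM m ε)))
            + ((A.card : ℝ))⁻¹ * ((m:ℝ)^A.card
              * ∑ i ∈ A, TT p f (Pi.single i (1 : ZMod m)))) := hsum
      _ = (m:ℝ)^A.card * (C ^ p * (m:ℝ) ^ p * (n:ℝ) ^ (1 - p / q) *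
          (((2 : ℝ) ^ A.card)⁻¹ * (∑ ε : Fin A.card → Bool, TT p f (iota A (epsPM m ε)))
            + ((A.card : ℝ))⁻¹ * ∑ i ∈ A, TT p f (Pi.single i (1 : ZMod m)))) := by
          ring
  have h2l : (0:ℝ) < (2:ℝ)^A.card := by positivity
  calc (2:ℝ)^A.card * ∑ i ∈ A, TT p f (Pi.single i ((m / 2 : ℕ) : ZMod m))
      ≤ (2:ℝ)^A.card * (C ^ p * (m:ℝ) ^ p * (n:ℝ) ^ (1 - p / q) *
        (((2 : ℝ) ^ A.card)⁻¹ * (∑ ε : Fin A.card → Bool, TT p f (iota A (epsPM m ε)))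
          + ((A.card : ℝ))⁻¹ * ∑ i ∈ A, TT p f (Pi.single i (1 : ZMod m)))) :=
        mul_le_mul_of_nonneg_left step h2l.le
    _ = C ^ p * (m:ℝ) ^ p * (n:ℝ) ^ (1 - p / q) *
          ((∑ ε : Fin A.card → Bool, TT p f (iota A (epsPM m ε)))
            + ((2:ℝ)^A.card / A.card) * ∑ i ∈ A, TT p f (Pi.single i (1 : ZMod m))) := by
        have hcc : (2:ℝ)^A.card * ((2:ℝ)^A.card)⁻¹ = 1 := mul_inv_cancel₀ (ne_of_gt h2l)
        field_simp

/-- support of a cube code. -/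
def suppc {n : ℕ} (c : Fin n → Fin 3) : Finset (Fin n) :=
  univ.filter (fun i => c i ≠ 1)

lemma fib (hA : A.Nonempty) :
    ∑ ε : Fin A.card → Bool, TT p f (iota A (epsPM m ε))
      = ∑ c ∈ univ.filter (fun c : Fin n → Fin 3 => suppc c = A), TT p f (eps3 m c) := by
  refine Finset.sum_nbij'
    (i := fun ε => fun i : Fin n => if h : i ∈ A then
      (if ε (A.equivFin ⟨i, h⟩) then (2 : Fin 3) else 0) else 1)
    (j := fun c => fun k : Fin A.card => decide (c ↑(A.equivFin.symm k) = 2))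
    ?_ ?_ ?_ ?_ ?_
  · intro ε _
    simp only [Finset.mem_filter, Finset.mem_univ, true_and]
    ext i
    simp only [suppc, Finset.mem_filter, Finset.mem_univ, true_and]
    by_cases h : i ∈ A
    · simp only [dif_pos h]
      constructor
      · intro _; exact h
      · intro _
        by_cases hε : ε (A.equivFin ⟨i, h⟩) <;> simp [hε]
    · simp only [dif_neg h]
      constructor
      · intro hc; exact absurd rfl hc
      · intro hc; exact absurd hc h
  · intro c _; exact mem_univ _
  · intro ε _
    funext k
    have hk : ↑(A.equivFin.symm k) ∈ A := (A.equivFin.symm k).2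
    simp only [dif_pos hk]
    rw [Subtype.coe_eta, Equiv.apply_symm_apply]
    by_cases hε : ε k <;> simp [hε]
  · intro c hc
    rw [Finset.mem_filter] at hc
    have hsupp := hc.2
    funext i
    by_cases h : i ∈ A
    · simp only [dif_pos h]
      have hne : c i ≠ 1 := by
        have : i ∈ suppc c := hsupp ▸ h
        simpa [suppc] using this
      simp only [Equiv.symm_apply_apply]
      rcases fin3_cases (c i) with h0 | h1 | h2
      · rw [h0]; simp
      · exact absurd h1 hne
      · rw [h2]; simp
    · simp only [dif_neg h]
      have h1 : i ∉ suppc c := hsupp ▸ h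
      have h2 : ¬(c i ≠ 1) := by simpa [suppc] using h1
      exact (not_not.1 h2).symm
  · intro ε _
    congr 1
    funext i
    by_cases h : i ∈ A
    · simp only [iota, eps3, dif_pos h, epsPM]
      by_cases hε : ε (A.equivFin ⟨i, h⟩)
      · simp only [hε, if_true]
        rw [show ((((2 : Fin 3) : ℕ) : ℤ) - 1 : ℤ) = 1 by decide]
        simp
      · simp only [hε]
        norm_num
    · simp only [iota, eps3, dif_neg h]
      rw [show ((((1 : Fin 3) : ℕ) : ℤ) - 1 : ℤ) = 0 by decide]
      simp

end Glue

section Counting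
variable {n : ℕ}

lemma pow_sum_powerset (s : Finset (Fin n)) :
    ∑ B ∈ s.powerset, (2:ℝ)^B.card = 3^s.card := by
  have h := Finset.prod_add (fun _ : Fin n => (2:ℝ)) (fun _ : Fin n => (1:ℝ)) s
  simp only [Finset.prod_const, one_pow, mul_one] at h
  rw [← h]
  norm_num

lemma count2 (i : Fin n) :
    ∑ A ∈ univ.filter (fun A : Finset (Fin n) => i ∈ A), (2:ℝ)^A.card
      = 2 * 3^(n-1) := by
  have hbij : ∑ A ∈ univ.filter (fun A : Finset (Fin n) => i ∈ A), (2:ℝ)^A.card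
      = ∑ B ∈ (univ.erase i).powerset, (2:ℝ)^(B.card + 1) := by
    refine Finset.sum_nbij' (i := fun A => A.erase i) (j := fun B => insert i B) ?_ ?_ ?_ ?_ ?_
    · intro A hA
      rw [Finset.mem_powerset]
      exact Finset.erase_subset_erase i (Finset.subset_univ A)
    · intro B hB
      simp only [Finset.mem_filter, Finset.mem_univ, true_and]
      exact Finset.mem_insert_self i B
    · intro A hA
      rw [Finset.mem_filter] at hA
      exact Finset.insert_erase hA.2
    · intro B hB
      rw [Finset.mem_powerset] at hB
      exact Finset.erase_insert (fun hi => (Finset.mem_erase.1 (hB hi)).1 rfl)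
    · intro A hA
      rw [Finset.mem_filter] at hA
      rw [Finset.card_erase_add_one hA.2]
  rw [hbij]
  have : ∀ B ∈ (univ.erase i).powerset, (2:ℝ)^(B.card + 1) = 2 * 2^B.card := by
    intro B _; ring
  rw [Finset.sum_congr rfl this, ← Finset.mul_sum, pow_sum_powerset]
  rw [Finset.card_erase_of_mem (mem_univ i), card_univ, Fintype.card_fin]

lemma choose_sum_pow (hn : 1 ≤ n) :
    ∑ k ∈ Finset.range n, ((n.choose (k+1)) : ℝ) * 2^(k+1) = 3^n - 1 := by
  have h := add_pow (2:ℝ) 1 n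
  rw [Finset.sum_range_succ'] at h
  simp only [one_pow, mul_one, pow_zero, Nat.choose_zero_right, Nat.cast_one, one_mul] at h
  have h3 : ((2:ℝ)+1)^n = 3^n := by norm_num
  rw [h3] at h
  rw [Finset.sum_congr rfl (fun k (_ : k ∈ Finset.range n) =>
    (mul_comm ((n.choose (k+1)):ℝ) (2^(k+1))))]
  linarith [h]

lemma count2d (hn : 1 ≤ n) (i : Fin n) :
    ∑ A ∈ univ.filter (fun A : Finset (Fin n) => i ∈ A), (2:ℝ)^A.card / A.card
      = (3^n - 1) / n := by
  have hbij : ∑ A ∈ univ.filter (fun A : Finset (Fin n) => i ∈ A), (2:ℝ)^A.card / A.card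
      = ∑ B ∈ (univ.erase i).powerset, (2:ℝ)^(B.card + 1) / (B.card + 1) := by
    refine Finset.sum_nbij' (i := fun A => A.erase i) (j := fun B => insert i B) ?_ ?_ ?_ ?_ ?_
    · intro A hA
      rw [Finset.mem_powerset]
      exact Finset.erase_subset_erase i (Finset.subset_univ A)
    · intro B hB
      simp only [Finset.mem_filter, Finset.mem_univ, true_and]
      exact Finset.mem_insert_self i B
    · intro A hA
      rw [Finset.mem_filter] at hA
      exact Finset.insert_erase hA.2
    · intro B hB
      rw [Finset.mem_powerset] at hB
      exact Finset.erase_insert (fun hi => (Finset.mem_erase.1 (hB hi)).1 rfl)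
    · intro A hA
      rw [Finset.mem_filter] at hA
      have hce := Finset.card_erase_add_one hA.2
      have hcast : ((A.erase i).card : ℝ) + 1 = (A.card : ℝ) := by exact_mod_cast hce
      rw [hce, hcast]
  rw [hbij, Finset.sum_powerset]
  rw [Finset.card_erase_of_mem (mem_univ i), card_univ, Fintype.card_fin]
  have hinner : ∀ k ∈ Finset.range ((n-1)+1),
      ∑ B ∈ Finset.powersetCard k (univ.erase i), ((2:ℝ)^(B.card + 1) / (B.card + 1))
      = ((n-1).choose k : ℝ) * (2^(k+1) / (k+1)) := by
    intro k _
    have : ∀ B ∈ Finset.powersetCard k (univ.erase i),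
        (2:ℝ)^(B.card + 1) / (B.card + 1) = 2^(k+1) / (k+1) := by
      intro B hB
      rw [(Finset.mem_powersetCard.1 hB).2]
    rw [Finset.sum_congr rfl this, Finset.sum_const, nsmul_eq_mul,
      Finset.card_powersetCard, Finset.card_erase_of_mem (mem_univ i), card_univ,
      Fintype.card_fin]
  rw [Finset.sum_congr rfl hinner]
  have hn1 : (n-1)+1 = n := by omega
  rw [hn1]
  rw [eq_div_iff (by positivity : (n:ℝ) ≠ 0)]
  rw [Finset.sum_mul]
  rw [← choose_sum_pow hn]
  refine Finset.sum_congr rfl fun k hk => ?_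
  have hchoose : (n:ℕ) * ((n-1).choose k) = (n.choose (k+1)) * (k+1) := by
    have := Nat.add_one_mul_choose_eq (n-1) k
    rw [show n-1+1 = n by omega] at this
    exact this
  have hcast : (n:ℝ) * ((n-1).choose k : ℝ) = (n.choose (k+1) : ℝ) * (k+1) := by
    exact_mod_cast congrArg (Nat.cast : ℕ → ℝ) hchoose
  have hk1 : ((k:ℝ)+1) ≠ 0 := by positivity
  field_simp
  linear_combination hcast

lemma swap_weight (wgt : Finset (Fin n) → ℝ) (g : Fin n → ℝ) :
    ∑ A ∈ univ.filter (fun A : Finset (Fin n) => A.Nonempty), wgt A * ∑ i ∈ A, g i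
      = ∑ i : Fin n, (∑ A ∈ univ.filter (fun A : Finset (Fin n) => i ∈ A), wgt A) * g i := by
  have e1 : ∀ A : Finset (Fin n), wgt A * ∑ i ∈ A, g i
      = ∑ i : Fin n, if i ∈ A then wgt A * g i else 0 := by
    intro A
    rw [Finset.mul_sum, Finset.sum_ite_mem, Finset.univ_inter]
  rw [Finset.sum_congr rfl (fun A _ => e1 A), Finset.sum_comm]
  refine Finset.sum_congr rfl fun i _ => ?_
  rw [Finset.sum_mul]
  have e2 : ∑ A ∈ univ.filter (fun A : Finset (Fin n) => A.Nonempty),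
      (if i ∈ A then wgt A * g i else 0)
      = ∑ A : Finset (Fin n), (if i ∈ A then wgt A * g i else 0) := by
    refine Finset.sum_subset (Finset.filter_subset _ _) ?_
    intro A _ hA
    rw [Finset.mem_filter, not_and] at hA
    have : ¬A.Nonempty := hA (mem_univ A)
    rw [if_neg]
    intro hi
    exact this ⟨i, hi⟩
  rw [e2, ← Finset.sum_filter]

end Counting

section Main
variable {M : Type*} [MetricSpace M]

lemma cotype_main (p q : ℝ) (hp : 1 ≤ p) {n m : ℕ}
    (hn : 1 ≤ n) (hm0 : 0 < m) (C : ℝ) (hC : 0 < C)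
    (h : ∀ ℓ : ℕ, 1 ≤ ℓ → ℓ ≤ n → ∀ g : (Fin ℓ → ZMod m) → M,
      ∑ j : Fin ℓ, ∑ x : Fin ℓ → Fin m,
          dist (g (toZMod x + Pi.single j ((m / 2 : ℕ) : ZMod m))) (g (toZMod x)) ^ p
        ≤ C ^ p * (m:ℝ) ^ p * (n:ℝ) ^ (1 - p / q) *
            (((2 : ℝ) ^ ℓ)⁻¹ * ∑ ε : Fin ℓ → Bool, ∑ x : Fin ℓ → Fin m,
                dist (g (toZMod x + epsPM m ε)) (g (toZMod x)) ^ p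
              + (ℓ : ℝ)⁻¹ * ∑ j : Fin ℓ, ∑ x : Fin ℓ → Fin m,
                  dist (g (toZMod x + Pi.single j (1 : ZMod m))) (g (toZMod x)) ^ p))
    (f : (Fin n → ZMod m) → M) :
    ∑ j : Fin n, ∑ x : Fin n → Fin m,
        dist (f (toZMod x + Pi.single j ((m / 2 : ℕ) : ZMod m))) (f (toZMod x)) ^ p
      ≤ (5 * C) ^ p * (m : ℝ) ^ p * (n : ℝ) ^ (1 - p / q) * ((3 : ℝ) ^ n)⁻¹ *
          ∑ ε : Fin n → Fin 3, ∑ x : Fin n → Fin m,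
            dist (f (toZMod x + eps3 m ε)) (f (toZMod x)) ^ p := by
  haveI : NeZero m := ⟨hm0.ne'⟩
  classical
  -- abbreviations
  set Cp : ℝ := C ^ p * (m:ℝ) ^ p * (n:ℝ) ^ (1 - p / q) with hCp
  have hCp0 : 0 ≤ Cp := by
    rw [hCp]
    have h1 : (0:ℝ) ≤ C ^ p := Real.rpow_nonneg hC.le p
    have h2 : (0:ℝ) ≤ (m:ℝ) ^ p := Real.rpow_nonneg (by positivity) p
    have h3 : (0:ℝ) ≤ (n:ℝ) ^ (1 - p/q) := Real.rpow_nonneg (by positivity) _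
    positivity
  set Q : ℝ := ∑ c : Fin n → Fin 3, TT p f (eps3 m c) with hQdef
  have hQ0 : 0 ≤ Q := Finset.sum_nonneg fun c _ => TT_nonneg p f _
  set S : ℝ := ∑ j : Fin n, TT p f (Pi.single j ((m / 2 : ℕ) : ZMod m)) with hSdef
  set D : ℝ := ∑ j : Fin n, TT p f (Pi.single j (1 : ZMod m)) with hDdef
  have hD0 : 0 ≤ D := Finset.sum_nonneg fun c _ => TT_nonneg p f _
  set K : ℝ := 2^(p-1) + 2^(p-1) * 2^(p-1) / 2 with hKdef
  have hK0 : 0 ≤ K := by rw [hKdef]; positivity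
  set t : ℝ := 3^(n-1) with htdef
  have ht0 : (0:ℝ) < t := by rw [htdef]; positivity
  have h3t : 3 * t = 3^n := by
    rw [htdef, ← pow_succ']
    congr 1
    omega
  -- convert the statement to TT-language
  have hLHS : ∑ j : Fin n, ∑ x : Fin n → Fin m,
      dist (f (toZMod x + Pi.single j ((m / 2 : ℕ) : ZMod m))) (f (toZMod x)) ^ p = S := by
    rw [hSdef]
    refine Finset.sum_congr rfl fun j _ => ?_
    exact sum_toZMod (fun x => dist (f (x + Pi.single j ((m / 2 : ℕ) : ZMod m))) (f x) ^ p)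
  have hRHS : ∑ ε : Fin n → Fin 3, ∑ x : Fin n → Fin m,
      dist (f (toZMod x + eps3 m ε)) (f (toZMod x)) ^ p = Q := by
    rw [hQdef]
    refine Finset.sum_congr rfl fun c _ => ?_
    exact sum_toZMod (fun x => dist (f (x + eps3 m c)) (f x) ^ p)
  rw [hLHS, hRHS]
  -- aggregate the instances over nonempty subsets
  have hIS := Finset.sum_le_sum (f := fun A : Finset (Fin n) =>
      (2:ℝ)^A.card * ∑ i ∈ A, TT p f (Pi.single i ((m / 2 : ℕ) : ZMod m)))
    (g := fun A : Finset (Fin n) => Cp *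
      ((∑ ε : Fin A.card → Bool, TT p f (iota A (epsPM m ε)))
        + ((2:ℝ)^A.card / A.card) * ∑ i ∈ A, TT p f (Pi.single i (1 : ZMod m))))
    (s := univ.filter (fun A : Finset (Fin n) => A.Nonempty))
    (fun A hA => inst_A p f A hp q C h (Finset.mem_filter.1 hA).2)
  -- LHS of hIS
  have hLS : ∑ A ∈ univ.filter (fun A : Finset (Fin n) => A.Nonempty),
      (2:ℝ)^A.card * ∑ i ∈ A, TT p f (Pi.single i ((m / 2 : ℕ) : ZMod m))
      = 2 * t * S := by
    rw [swap_weight (fun A => (2:ℝ)^A.card)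
      (fun i => TT p f (Pi.single i ((m / 2 : ℕ) : ZMod m)))]
    rw [Finset.sum_congr rfl (fun i (_ : i ∈ (univ : Finset (Fin n))) => by rw [count2 i])]
    rw [← Finset.mul_sum, hSdef, htdef]
  -- RHS of hIS
  have hRS : ∑ A ∈ univ.filter (fun A : Finset (Fin n) => A.Nonempty),
      Cp * ((∑ ε : Fin A.card → Bool, TT p f (iota A (epsPM m ε)))
        + ((2:ℝ)^A.card / A.card) * ∑ i ∈ A, TT p f (Pi.single i (1 : ZMod m)))
      ≤ Cp * (Q + (3^n - 1)/n * D) := by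
    rw [← Finset.mul_sum]
    refine mul_le_mul_of_nonneg_left ?_ hCp0
    rw [Finset.sum_add_distrib]
    have hE : ∑ A ∈ univ.filter (fun A : Finset (Fin n) => A.Nonempty),
        ∑ ε : Fin A.card → Bool, TT p f (iota A (epsPM m ε)) ≤ Q := by
      rw [Finset.sum_congr rfl (fun A hA => fib p f A (Finset.mem_filter.1 hA).2)]
      rw [← Finset.sum_biUnion]
      · refine Finset.sum_le_sum_of_subset_of_nonneg (Finset.subset_univ _) ?_
        intro c _ _
        exact TT_nonneg p f _
      · intro A hA B hB hAB
        refine Finset.disjoint_left.2 ?_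
        intro c hcA hcB
        rw [Finset.mem_filter] at hcA hcB
        exact hAB (hcA.2 ▸ hcB.2.symm ▸ rfl)
    have hDpart : ∑ A ∈ univ.filter (fun A : Finset (Fin n) => A.Nonempty),
        ((2:ℝ)^A.card / A.card) * ∑ i ∈ A, TT p f (Pi.single i (1 : ZMod m))
        = (3^n - 1)/n * D := by
      rw [swap_weight (fun A => (2:ℝ)^A.card / A.card)
        (fun i => TT p f (Pi.single i (1 : ZMod m)))]
      rw [Finset.sum_congr rfl (fun i (_ : i ∈ (univ : Finset (Fin n))) => by
        rw [count2d hn i])]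
      rw [← Finset.mul_sum, hDdef]
    rw [hDpart]
    exact add_le_add_left hE _
  rw [hLS] at hIS
  have hMain : 2 * t * S ≤ Cp * (Q + (3^n - 1)/n * D) := le_trans hIS hRS
  -- the crux bound
  have hcrux : 2 * t * D ≤ K * n * Q := by
    calc 2 * t * D = 2 * 3^(n-1) * ∑ j : Fin n, TT p f (Pi.single j 1) := by
          rw [htdef, hDdef]
      _ ≤ (2^(p-1) + 2^(p-1) * 2^(p-1) / 2) * n * ∑ c : Fin n → Fin 3, TT p f (eps3 m c) :=
          crux_sum p f hp hn
      _ = K * n * Q := by rw [hKdef, hQdef]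
  have hDQ : (3^n - 1)/n * D ≤ 3/2 * K * Q := by
    have hn0 : (0:ℝ) < n := by positivity
    have h31 : (0:ℝ) ≤ (3:ℝ)^n - 1 := by
      have h1 : ((1:ℝ))^n ≤ 3^n := pow_le_pow_left₀ (by norm_num) (by norm_num) n
      rw [one_pow] at h1
      linarith
    refine (mul_le_mul_iff_left₀ (by linarith : (0:ℝ) < 2 * t)).1 ?_
    calc (3^n - 1)/n * D * (2 * t) = (3^n - 1)/n * (2 * t * D) := by ring
      _ ≤ (3^n - 1)/n * (K * n * Q) := by
          refine mul_le_mul_of_nonneg_left hcrux ?_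
          positivity
      _ = (3^n - 1) * (K * Q) := by field_simp
      _ ≤ (3 * t) * (K * Q) := by
          rw [h3t]
          refine mul_le_mul_of_nonneg_right (by linarith) ?_
          positivity
      _ = 3/2 * K * Q * (2 * t) := by ring
  have hfinal : 2 * t * S ≤ Cp * ((2/3) * 5^p * Q) := by
    calc 2 * t * S ≤ Cp * (Q + 3/2 * K * Q) := by
          refine hMain.trans (mul_le_mul_of_nonneg_left ?_ hCp0)
          linarith
      _ = Cp * ((1 + 3/2 * K) * Q) := by ring
      _ ≤ Cp * ((2/3) * 5^p * Q) := by
          refine mul_le_mul_of_nonneg_left ?_ hCp0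
          refine mul_le_mul_of_nonneg_right ?_ hQ0
          have := scal hp
          rw [hKdef]
          linarith [scal hp]
  -- conclude
  have h5C : (5 * C) ^ p = 5^p * C^p := Real.mul_rpow (by norm_num) hC.le
  refine (mul_le_mul_iff_right₀ (by linarith : (0:ℝ) < 2 * t)).1 ?_
  calc 2 * t * S ≤ Cp * ((2/3) * 5^p * Q) := hfinal
    _ = 2 * t * ((5 * C) ^ p * (m : ℝ) ^ p * (n : ℝ) ^ (1 - p / q) * ((3:ℝ) ^ n)⁻¹ * Q) := by
        rw [h5C, hCp, ← h3t]
        have ht' : (3 * t)⁻¹ = 1 / (3 * t) := by rw [one_div]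
        field_simp
end Main
end MCPAux

open MetricCotypePaper in
/-- **Lemma 2.7.**  Let `M` be a metric space, `1 ≤ p ≤ q`, `n ≥ 1` and `m` even.
Assume that for some `C > 0`, for every `ℓ ≤ n` and every `f : (ℤ/mℤ)^ℓ → M`,
`∑_{j=1}^ℓ ∫ d(f(x + (m/2)e_j), f(x))^p dμ
  ≤ C^p m^p n^{1−p/q} (E_{ε ∈ {−1,1}^ℓ} ∫ d(f(x+ε), f(x))^p dμ
      + (1/ℓ) ∑_{j=1}^ℓ ∫ d(f(x+e_j), f(x))^p dμ)`.
Then `Γ_q^{(p)}(M; n, m) ≤ 5C`. -/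
theorem gammaNM_le_of_pm_ineq (M : Type*) [MetricSpace M] (p q : ℝ)
    (hp : 1 ≤ p) (hpq : p ≤ q) (n : ℕ) (hn : 1 ≤ n) (m : ℕ) (hm : Even m) (hm0 : 0 < m)
    (C : ℝ) (hC : 0 < C)
    (h : ∀ ℓ : ℕ, 1 ≤ ℓ → ℓ ≤ n → ∀ f : (Fin ℓ → ZMod m) → M,
      ∑ j : Fin ℓ, ∑ x : Fin ℓ → Fin m,
          dist (f (toZMod x + Pi.single j ((m / 2 : ℕ) : ZMod m))) (f (toZMod x)) ^ p
        ≤ C ^ p * (m : ℝ) ^ p * (n : ℝ) ^ (1 - p / q) *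
            (((2 : ℝ) ^ ℓ)⁻¹ * ∑ ε : Fin ℓ → Bool, ∑ x : Fin ℓ → Fin m,
                dist (f (toZMod x + epsPM m ε)) (f (toZMod x)) ^ p
              + (ℓ : ℝ)⁻¹ * ∑ j : Fin ℓ, ∑ x : Fin ℓ → Fin m,
                  dist (f (toZMod x + Pi.single j (1 : ZMod m))) (f (toZMod x)) ^ p)) :
    gammaNM M p q n m ≤ ENNReal.ofReal (5 * C) := by
  have hmem : (5 * C) ∈ {Γ : ℝ | 0 < Γ ∧ CotypeIneq M p q n m Γ} := by
    refine ⟨by linarith, ?_⟩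
    intro f
    exact MCPAux.cotype_main p q hp hn hm0 C hC h f
  simp only [gammaNM]
  exact iInf₂_le _ hmem
end
end

section
/- Let (M,d_M) be a metric space. For every positive integer n, every a ∈ ℕ, all even integers m, r with 0 ≤ r < m, and every f : (ℤ/mℤ)^n → M, ∑_{j=1}^n ∫ d_M(f(x + (am+r)e_j), f(x))² dμ(x) ≤ min{r², (m−r)²} · n · E_{ε∈{−1,1}^n} ∫ d_M(f(x+ε), f(x))² dμ(x), where the expectation is over uniform ε ∈ {−1,1}^n. In particular, B(M;n,ℓ) ≤ 1 for every positive integer n and every even positive integer ℓ. -/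
open scoped BigOperators ENNReal
open Filter

noncomputable section

namespace MetricCotypePaper

/-- The inequality defining `B(M; n, ℓ)` with constant `B`: for every even `m > 0` and
every `f : (ℤ/mℤ)^n → M`,
`∑_j ∫ d(f(x+ℓe_j), f(x))² dμ ≤ B² ℓ² n · E_{ε ∈ {−1,1}^n} ∫ d(f(x+ε), f(x))² dμ`. -/
def BIneq (M : Type*) [PseudoMetricSpace M] (n ℓ : ℕ) (B : ℝ) : Prop :=
  ∀ m : ℕ, Even m → 0 < m → ∀ f : (Fin n → ZMod m) → M,
    ∑ j : Fin n, ∑ x : Fin n → Fin m,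
        dist (f (toZMod x + Pi.single j ((ℓ : ℕ) : ZMod m))) (f (toZMod x)) ^ 2
      ≤ B ^ 2 * (ℓ : ℝ) ^ 2 * (n : ℝ) * ((2 : ℝ) ^ n)⁻¹ *
          ∑ ε : Fin n → Bool, ∑ x : Fin n → Fin m,
            dist (f (toZMod x + epsPM m ε)) (f (toZMod x)) ^ 2

/-- `B(M; n, ℓ)`, the infimum of the constants `B > 0` in `BIneq` (`∞` if none). -/
def Bconst (M : Type*) [PseudoMetricSpace M] (n ℓ : ℕ) : ℝ≥0∞ :=
  ⨅ B ∈ {B : ℝ | 0 < B ∧ BIneq M n ℓ B}, ENNReal.ofReal B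

end MetricCotypePaper

/-!
Write `E_f(c) = ∑_y d(f(y + c), f(y))²`. Translation invariance gives `E_f(-c) = E_f(c)`, and the
triangle inequality with Cauchy–Schwarz gives `E_f(a + b) ≤ 2E_f(a) + 2E_f(b)` and
`E_f(k • c) ≤ k² E_f(c)`. If `ε' ∈ {-1,1}^n` is `ε` with every sign except the `j`-th flipped,
then `ε + ε' = ±2e_j`, so averaging over `ε` gives `E_f(2e_j) ≤ 4 𝔼_ε E_f(ε)`, hence
`E_f(r e_j) ≤ r² 𝔼_ε E_f(ε)` for even `r`. Since `r e_j = -(m - r) e_j` in `(ℤ/mℤ)^n`, the same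
holds with `(m - r)²`.
-/

open Finset

namespace MetricCotypePaper

section ShiftEnergy

variable {G M : Type*} [AddCommGroup G] [Fintype G] [PseudoMetricSpace M]

def shiftEnergy (f : G → M) (c : G) : ℝ :=
  ∑ y, dist (f (y + c)) (f y) ^ 2

lemma shiftEnergy_eq_sum_translate (f : G → M) (a c : G) :
    shiftEnergy f c = ∑ y, dist (f (y + a + c)) (f (y + a)) ^ 2 :=
  (Fintype.sum_equiv (Equiv.addRight a) _ _ fun _ => rfl).symm

lemma shiftEnergy_neg (f : G → M) (c : G) : shiftEnergy f (-c) = shiftEnergy f c := by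
  rw [shiftEnergy_eq_sum_translate f c (-c)]
  exact sum_congr rfl fun y _ => by rw [add_neg_cancel_right, dist_comm]

lemma shiftEnergy_add_le (f : G → M) (a b : G) :
    shiftEnergy f (a + b) ≤ 2 * shiftEnergy f a + 2 * shiftEnergy f b := by
  rw [shiftEnergy_eq_sum_translate f a b, shiftEnergy, shiftEnergy, mul_sum, mul_sum,
    ← sum_add_distrib]
  refine sum_le_sum fun y _ => ?_
  have h := pow_le_pow_left₀ dist_nonneg
    (dist_triangle (f (y + a + b)) (f (y + a)) (f y)) 2
  rw [← add_assoc]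
  nlinarith [sq_nonneg (dist (f (y + a + b)) (f (y + a)) - dist (f (y + a)) (f y))]

lemma dist_sq_le_mul_sum_dist_sq (p : ℕ → M) (k : ℕ) :
    dist (p k) (p 0) ^ 2 ≤ k * ∑ i ∈ range k, dist (p (i + 1)) (p i) ^ 2 :=
  calc dist (p k) (p 0) ^ 2 ≤ (∑ i ∈ range k, dist (p (i + 1)) (p i)) ^ 2 := by
        refine pow_le_pow_left₀ dist_nonneg ?_ 2
        simpa only [dist_comm] using dist_le_range_sum_dist p k
    _ ≤ k * ∑ i ∈ range k, dist (p (i + 1)) (p i) ^ 2 := by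
        simpa using
          sq_sum_le_card_mul_sum_sq (s := range k) (f := fun i => dist (p (i + 1)) (p i))

lemma shiftEnergy_nsmul_le (f : G → M) (c : G) (k : ℕ) :
    shiftEnergy f (k • c) ≤ k ^ 2 * shiftEnergy f c :=
  calc shiftEnergy f (k • c)
      ≤ ∑ y, k * ∑ i ∈ range k, dist (f (y + (i + 1) • c)) (f (y + i • c)) ^ 2 :=
        sum_le_sum fun y _ => by
          simpa using dist_sq_le_mul_sum_dist_sq (fun i => f (y + i • c)) k
    _ = k * ∑ _i ∈ range k, shiftEnergy f c := by
        rw [← mul_sum, sum_comm]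
        refine congrArg _ (sum_congr rfl fun i _ => ?_)
        rw [shiftEnergy_eq_sum_translate f (i • c)]
        simp only [succ_nsmul, add_assoc]
    _ = k ^ 2 * shiftEnergy f c := by
        rw [sum_const, card_range, nsmul_eq_mul]
        ring

end ShiftEnergy

section Signs

variable {M : Type*} [PseudoMetricSpace M] {n m : ℕ}

def flipExcept (j : Fin n) (ε : Fin n → Bool) : Fin n → Bool :=
  fun i => if i = j then ε i else !ε i

lemma flipExcept_involutive (j : Fin n) : Function.Involutive (flipExcept j) := by
  intro ε
  funext i
  by_cases h : i = j <;> simp [flipExcept, h]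

lemma epsPM_add_epsPM_flipExcept (j : Fin n) (ε : Fin n → Bool) :
    epsPM m ε + epsPM m (flipExcept j ε) =
      if ε j then Pi.single j 2 else -Pi.single j 2 := by
  funext i
  by_cases h : i = j
  · subst h
    cases hε : ε i <;> simp [epsPM, flipExcept, hε] <;> ring
  · cases hε : ε i <;> cases ε j <;> simp [epsPM, flipExcept, h, hε]

variable [NeZero m]

lemma shiftEnergy_single_two_le (f : (Fin n → ZMod m) → M) (j : Fin n) :
    shiftEnergy f (Pi.single j 2) ≤ 4 * 𝔼 ε, shiftEnergy f (epsPM m ε) := by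
  have hpair (ε : Fin n → Bool) : shiftEnergy f (Pi.single j 2) ≤
      2 * shiftEnergy f (epsPM m ε) + 2 * shiftEnergy f (epsPM m (flipExcept j ε)) := by
    have h := shiftEnergy_add_le f (epsPM m ε) (epsPM m (flipExcept j ε))
    rw [epsPM_add_epsPM_flipExcept] at h
    split_ifs at h
    · exact h
    · rwa [shiftEnergy_neg] at h
  have hflip : 𝔼 ε, shiftEnergy f (epsPM m (flipExcept j ε)) = 𝔼 ε, shiftEnergy f (epsPM m ε) :=
    Fintype.expect_bijective _ (flipExcept_involutive j).bijective _ _ fun _ => rfl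
  calc shiftEnergy f (Pi.single j 2)
      = 𝔼 _ε : Fin n → Bool, shiftEnergy f (Pi.single j 2) := (Fintype.expect_const _).symm
    _ ≤ 𝔼 ε, (2 * shiftEnergy f (epsPM m ε) + 2 * shiftEnergy f (epsPM m (flipExcept j ε))) :=
        expect_le_expect fun ε _ => hpair ε
    _ = 4 * 𝔼 ε, shiftEnergy f (epsPM m ε) := by
        rw [expect_add_distrib, ← mul_expect, ← mul_expect, hflip]
        ring

lemma shiftEnergy_single_even_le (f : (Fin n → ZMod m) → M) (j : Fin n) {s : ℕ}
    (hs : Even s) :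
    shiftEnergy f (Pi.single j (s : ZMod m)) ≤ s ^ 2 * 𝔼 ε, shiftEnergy f (epsPM m ε) := by
  obtain ⟨t, rfl⟩ := hs
  have hsingle : Pi.single j ((t + t : ℕ) : ZMod m) =
      t • (Pi.single j 2 : Fin n → ZMod m) := by
    rw [← Pi.single_smul', nsmul_eq_mul]
    push_cast
    ring_nf
  calc shiftEnergy f (Pi.single j ((t + t : ℕ) : ZMod m))
      ≤ t ^ 2 * shiftEnergy f (Pi.single j 2) := by
        rw [hsingle]
        exact shiftEnergy_nsmul_le f _ t
    _ ≤ t ^ 2 * (4 * 𝔼 ε, shiftEnergy f (epsPM m ε)) := by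
        gcongr
        exact shiftEnergy_single_two_le f j
    _ = ((t + t : ℕ) : ℝ) ^ 2 * 𝔼 ε, shiftEnergy f (epsPM m ε) := by
        push_cast
        ring

lemma shiftEnergy_single_le_min (f : (Fin n → ZMod m) → M) (j : Fin n) {r : ℕ}
    (hm : Even m) (hr : Even r) (hrm : r ≤ m) :
    shiftEnergy f (Pi.single j (r : ZMod m)) ≤
      min ((r : ℝ) ^ 2) (((m : ℝ) - r) ^ 2) * 𝔼 ε, shiftEnergy f (epsPM m ε) := by
  rcases min_choice ((r : ℝ) ^ 2) (((m : ℝ) - r) ^ 2) with h | h <;> rw [h]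
  · exact shiftEnergy_single_even_le f j hr
  · have hneg : (Pi.single j (r : ZMod m) : Fin n → ZMod m) =
        -Pi.single j ((m - r : ℕ) : ZMod m) := by
      rw [← Pi.single_neg, Nat.cast_sub hrm, ZMod.natCast_self, zero_sub, neg_neg]
    rw [hneg, shiftEnergy_neg, ← Nat.cast_sub hrm]
    exact shiftEnergy_single_even_le f j ((Nat.even_sub hrm).2 (by simp [hm, hr]))

end Signs

section Coordinates

variable {M : Type*} [PseudoMetricSpace M] {n m : ℕ} [NeZero m]

lemma toZMod_bijective : Function.Bijective (toZMod : (Fin n → Fin m) → Fin n → ZMod m) := by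
  refine (Fintype.bijective_iff_injective_and_card _).2 ⟨fun x y h => ?_, by simp [ZMod.card]⟩
  funext i
  apply Fin.ext
  rw [← ZMod.val_cast_of_lt (x i).isLt, ← ZMod.val_cast_of_lt (y i).isLt]
  exact congrArg ZMod.val (congrFun h i)

lemma sum_dist_toZMod_sq (f : (Fin n → ZMod m) → M) (c : Fin n → ZMod m) :
    ∑ x : Fin n → Fin m, dist (f (toZMod x + c)) (f (toZMod x)) ^ 2 = shiftEnergy f c :=
  toZMod_bijective.sum_comp fun y => dist (f (y + c)) (f y) ^ 2

lemma sum_single_le_of_shiftEnergy_le (f : (Fin n → ZMod m) → M) (c : ZMod m) {K : ℝ}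
    (h : ∀ j, shiftEnergy f (Pi.single j c) ≤ K * 𝔼 ε, shiftEnergy f (epsPM m ε)) :
    ∑ j : Fin n, ∑ x : Fin n → Fin m, dist (f (toZMod x + Pi.single j c)) (f (toZMod x)) ^ 2
      ≤ K * n * ((2 : ℝ) ^ n)⁻¹ * ∑ ε : Fin n → Bool, ∑ x : Fin n → Fin m,
          dist (f (toZMod x + epsPM m ε)) (f (toZMod x)) ^ 2 := by
  simp only [sum_dist_toZMod_sq]
  calc _ ≤ ∑ _j : Fin n, K * 𝔼 ε, shiftEnergy f (epsPM m ε) := sum_le_sum fun j _ => h j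
    _ = _ := by
        rw [sum_const, card_univ, Fintype.card_fin, Fintype.expect_eq_sum_div_card,
          Fintype.card_fun, Fintype.card_bool, Fintype.card_fin, nsmul_eq_mul]
        push_cast
        ring

end Coordinates

end MetricCotypePaper

open MetricCotypePaper in
/-- **Lemma 6.1.**  For every metric space `M`, `n ≥ 1`, `a ∈ ℕ`, even `m, r` with
`0 ≤ r < m`, and every `f : (ℤ/mℤ)^n → M`,
`∑_j ∫ d(f(x + (am+r)e_j), f(x))² dμ
  ≤ min{r², (m−r)²}·n·E_{ε ∈ {−1,1}^n} ∫ d(f(x+ε), f(x))² dμ`.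
In particular, `B(M; n, ℓ) ≤ 1` for every `n ≥ 1` and every even `ℓ > 0`. -/
theorem a_priori_bound (M : Type*) [MetricSpace M] :
    (∀ n : ℕ, 1 ≤ n → ∀ a m r : ℕ, Even m → 0 < m → Even r → r < m →
      ∀ f : (Fin n → ZMod m) → M,
        ∑ j : Fin n, ∑ x : Fin n → Fin m,
            dist (f (toZMod x + Pi.single j ((a * m + r : ℕ) : ZMod m))) (f (toZMod x)) ^ 2
          ≤ min ((r : ℝ) ^ 2) (((m : ℝ) - (r : ℝ)) ^ 2) * (n : ℝ) * ((2 : ℝ) ^ n)⁻¹ *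
              ∑ ε : Fin n → Bool, ∑ x : Fin n → Fin m,
                dist (f (toZMod x + epsPM m ε)) (f (toZMod x)) ^ 2) ∧
    (∀ n ℓ : ℕ, 1 ≤ n → 0 < ℓ → Even ℓ → Bconst M n ℓ ≤ 1) := by
  refine ⟨fun n _ a m r hm hm0 hr hrm f => ?_, fun n ℓ _ _ hℓ => ?_⟩
  · have : NeZero m := ⟨hm0.ne'⟩
    have hcast : ((a * m + r : ℕ) : ZMod m) = r := by simp
    rw [hcast]
    exact sum_single_le_of_shiftEnergy_le f _ fun j => shiftEnergy_single_le_min f j hm hr hrm.le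
  · have hB : BIneq M n ℓ 1 := fun m _ hm0 f => by
      have : NeZero m := ⟨hm0.ne'⟩
      exact sum_single_le_of_shiftEnergy_le f _ fun j =>
        (shiftEnergy_single_even_le f j hℓ).trans_eq (by ring)
    exact (iInf₂_le 1 ⟨one_pos, hB⟩).trans_eq ENNReal.ofReal_one
end
end

section
/- Let (M,d_M) be a metric space. For all positive integers ℓ, k, s, t, B(M; ℓk, st) ≤ B(M; ℓ, s) · B(M; k, t). -/
open scoped BigOperators ENNReal
open Filter

noncomputable section

namespace MetricCotypePaper

section Aux
variable {M : Type*} [PseudoMetricSpace M]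

def tz {m : ℕ} {ι : Type*} (x : ι → Fin m) : ι → ZMod m := fun i => ((x i : ℕ) : ZMod m)
def pmg (m : ℕ) {ι : Type*} (ε : ι → Bool) : ι → ZMod m := fun i => if ε i then 1 else -1

def finZmodEquiv (m : ℕ) [NeZero m] : Fin m ≃ ZMod m where
  toFun a := ((a : ℕ) : ZMod m)
  invFun b := ⟨b.val, ZMod.val_lt b⟩
  left_inv a := by ext; simp [ZMod.val_natCast_of_lt a.isLt]
  right_inv b := ZMod.natCast_rightInverse b

noncomputable def Sq {ι : Type*} [Fintype ι] [DecidableEq ι] {m : ℕ} [NeZero m]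
    (f : (ι → ZMod m) → M) (v : ι → ZMod m) : ℝ :=
  ∑ y : ι → ZMod m, dist (f (y + v)) (f y) ^ 2

variable {ι : Type*} [Fintype ι] [DecidableEq ι] {m : ℕ} [NeZero m]

lemma Sq_nonneg (f : (ι → ZMod m) → M) (v : ι → ZMod m) : 0 ≤ Sq f v :=
  Finset.sum_nonneg fun _ _ => sq_nonneg _

lemma Sq_translate (f : (ι → ZMod m) → M) (u v : ι → ZMod m) :
    ∑ y : ι → ZMod m, dist (f (y + u + v)) (f (y + u)) ^ 2 = Sq f v :=
  Equiv.sum_comp (Equiv.addRight u) (fun y => dist (f (y + v)) (f y) ^ 2)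

lemma sum_tz (H : (ι → ZMod m) → ℝ) :
    ∑ x : ι → Fin m, H (tz x) = ∑ y : ι → ZMod m, H y := by
  have := Equiv.sum_comp (Equiv.piCongrRight fun _ : ι => finZmodEquiv m) H
  convert this using 2
  rfl

lemma step {n ℓc m' : ℕ} [NeZero m'] {B : ℝ} (hB : BIneq M n ℓc B) (hme : Even m') (hm : 0 < m')
    (F : (ι → ZMod m') → M) (T : (Fin n → ZMod m') → (ι → ZMod m'))
    (hT : ∀ u v, T (u + v) = T u + T v) :
    ∑ j : Fin n, Sq F (T (Pi.single j ((ℓc : ℕ) : ZMod m')))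
      ≤ B ^ 2 * (ℓc : ℝ) ^ 2 * (n : ℝ) * ((2:ℝ) ^ n)⁻¹ *
        ∑ ε : Fin n → Bool, Sq F (T (pmg m' ε)) := by
  set κ : ℝ := (Fintype.card (Fin n → Fin m') : ℝ) with hκ
  have hκpos : 0 < κ := by
    have h : 0 < Fintype.card (Fin n → Fin m') := Fintype.card_pos_iff.mpr ⟨fun _ => ⟨0, hm⟩⟩
    rw [hκ]
    exact_mod_cast h
  have collapse : ∀ w : Fin n → ZMod m',
      ∑ c : ι → ZMod m', ∑ x : Fin n → Fin m',
        dist (F (c + T (toZMod x + w))) (F (c + T (toZMod x))) ^ 2 = κ * Sq F (T w) := by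
    intro w
    rw [Finset.sum_comm]
    have inner : ∀ x : Fin n → Fin m',
        ∑ c : ι → ZMod m', dist (F (c + T (toZMod x + w))) (F (c + T (toZMod x))) ^ 2
          = Sq F (T w) := by
      intro x
      simp only [hT, ← add_assoc]
      exact Sq_translate F (T (toZMod x)) (T w)
    rw [Finset.sum_congr rfl fun x _ => inner x, Finset.sum_const, Finset.card_univ,
      nsmul_eq_mul]
  have main : ∀ c : ι → ZMod m',
      ∑ j : Fin n, ∑ x : Fin n → Fin m',
        dist (F (c + T (toZMod x + Pi.single j ((ℓc : ℕ) : ZMod m'))))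
          (F (c + T (toZMod x))) ^ 2
      ≤ B ^ 2 * (ℓc : ℝ) ^ 2 * (n : ℝ) * ((2:ℝ) ^ n)⁻¹ *
          ∑ ε : Fin n → Bool, ∑ x : Fin n → Fin m',
            dist (F (c + T (toZMod x + epsPM m' ε))) (F (c + T (toZMod x))) ^ 2 :=
    fun c => hB m' hme hm (fun z => F (c + T z))
  have summed := Finset.sum_le_sum (fun c (_ : c ∈ Finset.univ) => main c)
  rw [← Finset.mul_sum] at summed
  rw [Finset.sum_comm] at summed
  rw [Finset.sum_congr rfl (fun j _ => collapse (Pi.single j ((ℓc : ℕ) : ZMod m')))] at summed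
  rw [Finset.sum_comm] at summed
  rw [Finset.sum_congr rfl (fun ε _ => collapse (epsPM m' ε))] at summed
  rw [← Finset.mul_sum, ← Finset.mul_sum] at summed
  have hpm : pmg m' = fun ε : Fin n → Bool => epsPM m' ε := rfl
  calc ∑ j : Fin n, Sq F (T (Pi.single j ((ℓc : ℕ) : ZMod m')))
      = κ⁻¹ * (κ * ∑ j : Fin n, Sq F (T (Pi.single j ((ℓc : ℕ) : ZMod m')))) := by
        field_simp
    _ ≤ κ⁻¹ * (B ^ 2 * (ℓc : ℝ) ^ 2 * (n : ℝ) * ((2:ℝ) ^ n)⁻¹ *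
          (κ * ∑ ε : Fin n → Bool, Sq F (T (epsPM m' ε)))) :=
        mul_le_mul_of_nonneg_left summed (by positivity)
    _ = B ^ 2 * (ℓc : ℝ) ^ 2 * (n : ℝ) * ((2:ℝ) ^ n)⁻¹ *
          ∑ ε : Fin n → Bool, Sq F (T (pmg m' ε)) := by
        rw [hpm]
        field_simp

lemma single_comp_equiv {ι₂ : Type*} (e : ι₂ ≃ ι) [DecidableEq ι₂] (p : ι₂) (c : ZMod m) :
    (Pi.single (e p) c) ∘ e = Pi.single p c := by
  funext q
  simp only [Function.comp_apply, Pi.single_apply, EmbeddingLike.apply_eq_iff_eq]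

lemma Sq_reindex {ι₂ : Type*} [Fintype ι₂] [DecidableEq ι₂] (e : ι ≃ ι₂)
    (f : (ι₂ → ZMod m) → M) (v : ι₂ → ZMod m) :
    Sq (fun g : ι → ZMod m => f (g ∘ e.symm)) (v ∘ e) = Sq f v := by
  simp only [Sq]
  calc ∑ g : ι → ZMod m, dist (f ((g + v ∘ e) ∘ e.symm)) (f (g ∘ e.symm)) ^ 2
      = ∑ g : ι → ZMod m, dist (f (g ∘ e.symm + v)) (f (g ∘ e.symm)) ^ 2 := by
        apply Finset.sum_congr rfl
        intro g _
        have h2 : (g + v ∘ ⇑e) ∘ ⇑e.symm = g ∘ ⇑e.symm + v := by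
          funext i
          simp
        rw [h2]
    _ = ∑ h : ι₂ → ZMod m, dist (f (h + v)) (f h) ^ 2 :=
        Equiv.sum_comp (Equiv.arrowCongr e (Equiv.refl (ZMod m)))
          (fun h => dist (f (h + v)) (f h) ^ 2)

end Aux

lemma BIneq.mul {M : Type*} [PseudoMetricSpace M] {n₁ n₂ ℓ₁ ℓ₂ : ℕ} {B₁ B₂ : ℝ}
    (hn₁ : 1 ≤ n₁) (h₁ : BIneq M n₁ ℓ₁ B₁) (h₂ : BIneq M n₂ ℓ₂ B₂) :
    BIneq M (n₁ * n₂) (ℓ₁ * ℓ₂) (B₁ * B₂) := by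
  intro m hme hm f
  haveI : NeZero m := ⟨hm.ne'⟩
  set e := (finProdFinEquiv : Fin n₁ × Fin n₂ ≃ Fin (n₁ * n₂)) with he
  set F : ((Fin n₁ × Fin n₂) → ZMod m) → M := fun g => f (g ∘ e.symm) with hF
  have conv1 : ∀ v : Fin (n₁ * n₂) → ZMod m,
      ∑ x : Fin (n₁ * n₂) → Fin m, dist (f (toZMod x + v)) (f (toZMod x)) ^ 2 = Sq f v :=
    fun v => sum_tz (fun y => dist (f (y + v)) (f y) ^ 2)
  have conv2 : ∀ v : Fin (n₁ * n₂) → ZMod m, Sq f v = Sq F (v ∘ e) :=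
    fun v => (Sq_reindex e f v).symm
  simp only [conv1, conv2]
  rw [← Equiv.sum_comp e (fun j => Sq F ((Pi.single j (((ℓ₁ * ℓ₂ : ℕ) : ZMod m))) ∘ e))]
  simp only [single_comp_equiv]
  rw [show ∑ ε : Fin (n₁ * n₂) → Bool, Sq F ((epsPM m ε) ∘ e)
      = ∑ ζ : Fin n₁ × Fin n₂ → Bool, Sq F (pmg m ζ) from
    Equiv.sum_comp (Equiv.arrowCongr e.symm (Equiv.refl Bool))
      (fun ζ : Fin n₁ × Fin n₂ → Bool => Sq F (pmg m ζ))]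
  -- core inequality on the product index
  set T : Fin n₁ → (Fin n₂ → ZMod m) → (Fin n₁ × Fin n₂ → ZMod m) :=
    fun a y p => if p.1 = a then ((ℓ₁ : ℕ) : ZMod m) * y p.2 else 0 with hT
  set U : (Fin n₁ × Fin n₂ → Bool) → (Fin n₁ → ZMod m) → (Fin n₁ × Fin n₂ → ZMod m) :=
    fun D z p => z p.1 * (if D p then 1 else -1) with hU
  have step1 : ∀ a : Fin n₁,
      ∑ b : Fin n₂, Sq F (T a (Pi.single b ((ℓ₂ : ℕ) : ZMod m)))
        ≤ B₂ ^ 2 * (ℓ₂ : ℝ) ^ 2 * (n₂ : ℝ) * ((2:ℝ) ^ n₂)⁻¹ *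
            ∑ δ : Fin n₂ → Bool, Sq F (T a (pmg m δ)) := by
    intro a
    refine step h₂ hme hm F (T a) ?_
    intro u v
    funext p
    by_cases h : p.1 = a <;> simp [hT, h, mul_add]
  have Tsingle : ∀ (a : Fin n₁) (b : Fin n₂),
      T a (Pi.single b ((ℓ₂ : ℕ) : ZMod m))
        = Pi.single ((a, b) : Fin n₁ × Fin n₂) (((ℓ₁ * ℓ₂ : ℕ) : ZMod m)) := by
    intro a b
    funext p
    obtain ⟨pa, pb⟩ := p
    simp only [hT, Pi.single_apply, Prod.mk.injEq]
    by_cases h1 : pa = a <;> by_cases h2 : pb = b <;> simp [h1, h2, Nat.cast_mul]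
  have Usingle : ∀ (D : Fin n₁ × Fin n₂ → Bool) (a : Fin n₁),
      U D (Pi.single a ((ℓ₁ : ℕ) : ZMod m)) = T a (pmg m (fun b => D (a, b))) := by
    intro D a
    funext p
    by_cases h : p.1 = a
    · subst h
      simp [hU, hT, pmg, Pi.single_apply]
    · simp [hU, hT, pmg, Pi.single_apply, h]
  have Ueps : ∀ (D : Fin n₁ × Fin n₂ → Bool) (ε : Fin n₁ → Bool),
      U D (pmg m ε) = pmg m (fun p => ε p.1 == D p) := by
    intro D ε
    funext p
    simp only [hU, pmg]
    rcases Bool.eq_false_or_eq_true (ε p.1) with hε | hε <;>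
      rcases Bool.eq_false_or_eq_true (D p) with hD | hD <;> simp [hε, hD]
  have s2 : ∀ D : Fin n₁ × Fin n₂ → Bool,
      ∑ a : Fin n₁, Sq F (T a (pmg m (fun b => D (a, b))))
        ≤ B₁ ^ 2 * (ℓ₁ : ℝ) ^ 2 * (n₁ : ℝ) * ((2:ℝ) ^ n₁)⁻¹ *
            ∑ ε : Fin n₁ → Bool, Sq F (pmg m (fun p => ε p.1 == D p)) := by
    intro D
    have hadd : ∀ u v : Fin n₁ → ZMod m, U D (u + v) = U D u + U D v := by
      intro u v
      funext p
      simp only [hU, Pi.add_apply, add_mul]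
    have hstep := step h₁ hme hm F (U D) hadd
    simp only [Usingle, Ueps] at hstep
    exact hstep
  have count : ∀ (a : Fin n₁) (G : (Fin n₂ → Bool) → ℝ),
      ∑ D : Fin n₁ × Fin n₂ → Bool, G (fun b => D (a, b))
        = ((2:ℝ) ^ n₂) ^ (n₁ - 1) * ∑ δ : Fin n₂ → Bool, G δ := by
    intro a G
    calc ∑ D : Fin n₁ × Fin n₂ → Bool, G (fun b => D (a, b))
        = ∑ g : Fin n₁ → Fin n₂ → Bool, G (g a) :=
          Equiv.sum_comp (Equiv.curry (Fin n₁) (Fin n₂) Bool) (fun g => G (g a))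
      _ = ∑ q : (Fin n₂ → Bool) × ({j : Fin n₁ // j ≠ a} → (Fin n₂ → Bool)), G q.1 :=
          Equiv.sum_comp (Equiv.funSplitAt a (Fin n₂ → Bool)) (fun q => G q.1)
      _ = ∑ u : Fin n₂ → Bool, ∑ _r : {j : Fin n₁ // j ≠ a} → (Fin n₂ → Bool), G u :=
          Fintype.sum_prod_type _
      _ = ((2:ℝ) ^ n₂) ^ (n₁ - 1) * ∑ δ : Fin n₂ → Bool, G δ := by
          have hcard : (Fintype.card ({j : Fin n₁ // j ≠ a} → (Fin n₂ → Bool)) : ℝ)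
              = ((2:ℝ) ^ n₂) ^ (n₁ - 1) := by
            have : Fintype.card {j : Fin n₁ // j ≠ a} = n₁ - 1 := by
              simp [Fintype.card_subtype_compl]
            rw [Fintype.card_fun, this]
            push_cast
            simp
          simp only [Finset.sum_const, Finset.card_univ, nsmul_eq_mul, ← Finset.mul_sum]
          rw [hcard]
  have inv : ∀ ε : Fin n₁ → Bool,
      ∑ D : Fin n₁ × Fin n₂ → Bool, Sq F (pmg m (fun p => ε p.1 == D p))
        = ∑ ζ : Fin n₁ × Fin n₂ → Bool, Sq F (pmg m ζ) := by
    intro ε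
    have hinv : Function.Involutive
        (fun D : Fin n₁ × Fin n₂ → Bool => fun p => (ε p.1 == D p)) := by
      intro D
      funext p
      rcases Bool.eq_false_or_eq_true (ε p.1) with hε | hε <;>
        rcases Bool.eq_false_or_eq_true (D p) with hD | hD <;> simp [hε, hD]
    exact Equiv.sum_comp hinv.toPerm (fun ζ => Sq F (pmg m ζ))
  set R : ℝ := ((2:ℝ) ^ n₂) ^ (n₁ - 1) with hR
  have hRpos : (0:ℝ) < R := by positivity
  have hmain : R * (∑ a : Fin n₁, ∑ δ : Fin n₂ → Bool, Sq F (T a (pmg m δ)))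
      ≤ B₁ ^ 2 * (ℓ₁ : ℝ) ^ 2 * (n₁ : ℝ) *
          ∑ ζ : Fin n₁ × Fin n₂ → Bool, Sq F (pmg m ζ) := by
    calc R * (∑ a : Fin n₁, ∑ δ : Fin n₂ → Bool, Sq F (T a (pmg m δ)))
        = ∑ a : Fin n₁, ∑ D : Fin n₁ × Fin n₂ → Bool,
            Sq F (T a (pmg m (fun b => D (a, b)))) := by
          rw [Finset.mul_sum]
          exact Finset.sum_congr rfl fun a _ => (count a _).symm
      _ = ∑ D : Fin n₁ × Fin n₂ → Bool, ∑ a : Fin n₁,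
            Sq F (T a (pmg m (fun b => D (a, b)))) := Finset.sum_comm
      _ ≤ ∑ D : Fin n₁ × Fin n₂ → Bool, (B₁ ^ 2 * (ℓ₁ : ℝ) ^ 2 * (n₁ : ℝ) * ((2:ℝ) ^ n₁)⁻¹ *
            ∑ ε : Fin n₁ → Bool, Sq F (pmg m (fun p => ε p.1 == D p))) :=
          Finset.sum_le_sum fun D _ => s2 D
      _ = B₁ ^ 2 * (ℓ₁ : ℝ) ^ 2 * (n₁ : ℝ) * ((2:ℝ) ^ n₁)⁻¹ *
            ∑ ε : Fin n₁ → Bool, ∑ D : Fin n₁ × Fin n₂ → Bool,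
              Sq F (pmg m (fun p => ε p.1 == D p)) := by
          rw [← Finset.mul_sum, Finset.sum_comm]
      _ = B₁ ^ 2 * (ℓ₁ : ℝ) ^ 2 * (n₁ : ℝ) * ((2:ℝ) ^ n₁)⁻¹ *
            ∑ _ε : Fin n₁ → Bool, ∑ ζ : Fin n₁ × Fin n₂ → Bool, Sq F (pmg m ζ) := by
          rw [Finset.sum_congr rfl fun ε _ => inv ε]
      _ = B₁ ^ 2 * (ℓ₁ : ℝ) ^ 2 * (n₁ : ℝ) *
            ∑ ζ : Fin n₁ × Fin n₂ → Bool, Sq F (pmg m ζ) := by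
          rw [Finset.sum_const, Finset.card_univ, nsmul_eq_mul]
          have hcb : (Fintype.card (Fin n₁ → Bool) : ℝ) = (2:ℝ) ^ n₁ := by
            rw [Fintype.card_fun]
            push_cast
            simp
          rw [hcb]
          field_simp
  have step2sum : ∑ a : Fin n₁, ∑ δ : Fin n₂ → Bool, Sq F (T a (pmg m δ))
      ≤ R⁻¹ * (B₁ ^ 2 * (ℓ₁ : ℝ) ^ 2 * (n₁ : ℝ) *
          ∑ ζ : Fin n₁ × Fin n₂ → Bool, Sq F (pmg m ζ)) := by
    calc ∑ a : Fin n₁, ∑ δ : Fin n₂ → Bool, Sq F (T a (pmg m δ))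
        = R⁻¹ * (R * (∑ a : Fin n₁, ∑ δ : Fin n₂ → Bool, Sq F (T a (pmg m δ)))) := by
          field_simp
      _ ≤ _ := mul_le_mul_of_nonneg_left hmain (by positivity)
  have hpow : (2:ℝ) ^ n₂ * R = (2:ℝ) ^ (n₁ * n₂) := by
    rw [hR, ← pow_succ', Nat.sub_add_cancel hn₁, ← pow_mul, mul_comm n₂ n₁]
  calc ∑ p : Fin n₁ × Fin n₂, Sq F (Pi.single p ((ℓ₁ * ℓ₂ : ℕ) : ZMod m))
      = ∑ a : Fin n₁, ∑ b : Fin n₂, Sq F (Pi.single ((a, b) : Fin n₁ × Fin n₂)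
          ((ℓ₁ * ℓ₂ : ℕ) : ZMod m)) := Fintype.sum_prod_type _
    _ = ∑ a : Fin n₁, ∑ b : Fin n₂, Sq F (T a (Pi.single b ((ℓ₂ : ℕ) : ZMod m))) := by
        simp only [Tsingle]
    _ ≤ ∑ a : Fin n₁, (B₂ ^ 2 * (ℓ₂ : ℝ) ^ 2 * (n₂ : ℝ) * ((2:ℝ) ^ n₂)⁻¹ *
          ∑ δ : Fin n₂ → Bool, Sq F (T a (pmg m δ))) :=
        Finset.sum_le_sum fun a _ => step1 a
    _ = B₂ ^ 2 * (ℓ₂ : ℝ) ^ 2 * (n₂ : ℝ) * ((2:ℝ) ^ n₂)⁻¹ *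
          ∑ a : Fin n₁, ∑ δ : Fin n₂ → Bool, Sq F (T a (pmg m δ)) :=
        (Finset.mul_sum _ _ _).symm
    _ ≤ B₂ ^ 2 * (ℓ₂ : ℝ) ^ 2 * (n₂ : ℝ) * ((2:ℝ) ^ n₂)⁻¹ *
          (R⁻¹ * (B₁ ^ 2 * (ℓ₁ : ℝ) ^ 2 * (n₁ : ℝ) *
            ∑ ζ : Fin n₁ × Fin n₂ → Bool, Sq F (pmg m ζ))) :=
        mul_le_mul_of_nonneg_left step2sum (by positivity)
    _ = (B₁ * B₂) ^ 2 * ((ℓ₁ * ℓ₂ : ℕ) : ℝ) ^ 2 * ((n₁ * n₂ : ℕ) : ℝ) *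
          ((2:ℝ) ^ (n₁ * n₂))⁻¹ * ∑ ζ : Fin n₁ × Fin n₂ → Bool, Sq F (pmg m ζ) := by
        rw [← hpow]
        push_cast
        have h2 : ((2:ℝ) ^ n₂) ≠ 0 := by positivity
        field_simp

lemma Bconst_le_ofReal {M : Type*} [PseudoMetricSpace M] {n ℓ : ℕ} {B : ℝ}
    (hB : 0 < B) (h : BIneq M n ℓ B) : Bconst M n ℓ ≤ ENNReal.ofReal B :=
  iInf₂_le B ⟨hB, h⟩

lemma le_Bconst {M : Type*} [PseudoMetricSpace M] {n ℓ : ℕ} {a : ℝ≥0∞}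
    (h : ∀ B : ℝ, 0 < B → BIneq M n ℓ B → a ≤ ENNReal.ofReal B) : a ≤ Bconst M n ℓ :=
  le_iInf₂ fun B hB => h B hB.1 hB.2

lemma Bconst_eq_zero_of_subsingleton {M : Type*} [PseudoMetricSpace M]
    (hsub : ∀ x y : M, x = y) (n ℓ : ℕ) : Bconst M n ℓ = 0 := by
  have hBI : ∀ B : ℝ, 0 < B → BIneq M n ℓ B := by
    intro B hB m hme hm f
    have hz : ∀ u v : (Fin n → ZMod m), dist (f u) (f v) = 0 := by
      intro u v
      rw [hsub (f u) (f v)]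
      exact dist_self _
    have hL : ∑ j : Fin n, ∑ x : Fin n → Fin m,
        dist (f (toZMod x + Pi.single j ((ℓ : ℕ) : ZMod m))) (f (toZMod x)) ^ 2 = 0 := by
      apply Finset.sum_eq_zero
      intro j _
      apply Finset.sum_eq_zero
      intro x _
      rw [hz]
      norm_num
    rw [hL]
    have : (0:ℝ) ≤ ∑ ε : Fin n → Bool, ∑ x : Fin n → Fin m,
        dist (f (toZMod x + epsPM m ε)) (f (toZMod x)) ^ 2 :=
      Finset.sum_nonneg fun ε _ => Finset.sum_nonneg fun x _ => sq_nonneg _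
    positivity
  apply le_antisymm _ zero_le
  refine ENNReal.le_of_forall_pos_le_add ?_
  intro ε hε _
  rw [zero_add]
  calc Bconst M n ℓ ≤ ENNReal.ofReal (ε : ℝ) :=
        Bconst_le_ofReal (by exact_mod_cast hε) (hBI _ (by exact_mod_cast hε))
    _ = (ε : ℝ≥0∞) := ENNReal.ofReal_coe_nnreal

lemma term_le_sum {M : Type*} [PseudoMetricSpace M] {n m : ℕ}
    (f : (Fin n → ZMod m) → M) (c : ZMod m) (j₀ : Fin n) (x₀ : Fin n → Fin m) :
    dist (f (toZMod x₀ + Pi.single j₀ c)) (f (toZMod x₀)) ^ 2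
      ≤ ∑ j : Fin n, ∑ x : Fin n → Fin m,
          dist (f (toZMod x + Pi.single j c)) (f (toZMod x)) ^ 2 := by
  have h1 : dist (f (toZMod x₀ + Pi.single j₀ c)) (f (toZMod x₀)) ^ 2
      ≤ ∑ x : Fin n → Fin m, dist (f (toZMod x + Pi.single j₀ c)) (f (toZMod x)) ^ 2 :=
    Finset.single_le_sum (f := fun x : Fin n → Fin m =>
        dist (f (toZMod x + Pi.single j₀ c)) (f (toZMod x)) ^ 2)
      (fun i _ => sq_nonneg _) (Finset.mem_univ x₀)
  refine h1.trans ?_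
  have h2 := Finset.single_le_sum (s := (Finset.univ : Finset (Fin n)))
      (f := fun j : Fin n => ∑ x : Fin n → Fin m,
        dist (f (toZMod x + Pi.single j c)) (f (toZMod x)) ^ 2)
      (fun j _ => Finset.sum_nonneg fun x _ => sq_nonneg _) (Finset.mem_univ j₀)
  exact h2

set_option maxHeartbeats 1000000 in
lemma eq_of_Bconst_eq_zero {M : Type*} [MetricSpace M] {n ℓ : ℕ}
    (hn : 1 ≤ n) (hl : 1 ≤ ℓ) (h : Bconst M n ℓ = 0) (x y : M) : x = y := by
  classical
  set m := 2 * ℓ with hmdef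
  have hm : 0 < m := by omega
  have hme : Even m := ⟨ℓ, two_mul ℓ⟩
  haveI : NeZero m := ⟨hm.ne'⟩
  set j₀ : Fin n := ⟨0, hn⟩ with hj₀
  set f : (Fin n → ZMod m) → M := fun z => if z j₀ = 0 then x else y with hf
  set L : ℝ := ∑ j : Fin n, ∑ x : Fin n → Fin m,
      dist (f (toZMod x + Pi.single j ((ℓ : ℕ) : ZMod m))) (f (toZMod x)) ^ 2 with hLdef
  set Sig : ℝ := ∑ ε : Fin n → Bool, ∑ x : Fin n → Fin m,
      dist (f (toZMod x + epsPM m ε)) (f (toZMod x)) ^ 2 with hSig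
  have hSignn : 0 ≤ Sig :=
    Finset.sum_nonneg fun ε _ => Finset.sum_nonneg fun x _ => sq_nonneg _
  set K : ℝ := (ℓ : ℝ) ^ 2 * (n : ℝ) * ((2:ℝ) ^ n)⁻¹ * Sig with hK
  have hKnn : 0 ≤ K := by positivity
  have hLnn : 0 ≤ L :=
    Finset.sum_nonneg fun j _ => Finset.sum_nonneg fun x _ => sq_nonneg _
  have hL0 : L = 0 := by
    by_contra hL
    have hLpos : 0 < L := lt_of_le_of_ne hLnn (Ne.symm hL)
    set η : ℝ := Real.sqrt (L / (K + 1)) with hη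
    have hηpos : 0 < η := Real.sqrt_pos.mpr (by positivity)
    have hlt : Bconst M n ℓ < ENNReal.ofReal η := by
      rw [h]
      exact ENNReal.ofReal_pos.mpr hηpos
    simp only [Bconst, iInf_lt_iff] at hlt
    obtain ⟨B, hBS, hBlt⟩ := hlt
    obtain ⟨hBpos, hBI⟩ := hBS
    have hBη : B < η := by
      rw [ENNReal.ofReal_lt_ofReal_iff hηpos] at hBlt
      exact hBlt
    have hIneq := hBI m hme hm f
    rw [← hLdef, ← hSig] at hIneq
    have hre : B ^ 2 * (ℓ : ℝ) ^ 2 * (n : ℝ) * ((2:ℝ) ^ n)⁻¹ * Sig = B ^ 2 * K := by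
      rw [hK]; ring
    rw [hre] at hIneq
    have hB2 : B ^ 2 < η ^ 2 := by
      apply pow_lt_pow_left₀ hBη hBpos.le
      norm_num
    have hη2 : η ^ 2 = L / (K + 1) := Real.sq_sqrt (by positivity)
    have : L < L := by
      calc L ≤ B ^ 2 * K := hIneq
        _ ≤ B ^ 2 * (K + 1) := by nlinarith
        _ < η ^ 2 * (K + 1) := by nlinarith
        _ = L := by rw [hη2]; field_simp
    exact lt_irrefl L this
  -- extract the single term
  set x₀ : Fin n → Fin m := fun _ => (⟨0, hm⟩ : Fin m) with hx₀
  have hterm := term_le_sum f ((ℓ : ℕ) : ZMod m) j₀ x₀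
  rw [← hLdef, hL0] at hterm
  have h2 : dist (f (toZMod x₀ + Pi.single j₀ ((ℓ : ℕ) : ZMod m))) (f (toZMod x₀)) ^ 2 = 0 :=
    le_antisymm hterm (sq_nonneg _)
  have hdist : dist (f (toZMod x₀ + Pi.single j₀ ((ℓ : ℕ) : ZMod m))) (f (toZMod x₀)) = 0 :=
    (pow_eq_zero_iff two_ne_zero).mp h2
  have hne : ((ℓ : ℕ) : ZMod m) ≠ 0 := by
    intro h0
    rw [ZMod.natCast_eq_zero_iff] at h0
    have := Nat.le_of_dvd (by omega) h0
    omega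
  have hbase : toZMod x₀ j₀ = 0 := by
    simp [toZMod, hx₀]
  have hshift : (toZMod x₀ + Pi.single j₀ ((ℓ : ℕ) : ZMod m) : Fin n → ZMod m) j₀
      = ((ℓ : ℕ) : ZMod m) := by
    rw [Pi.add_apply, hbase, Pi.single_eq_same, zero_add]
  have hv1 : f (toZMod x₀ + Pi.single j₀ ((ℓ : ℕ) : ZMod m)) = y := by
    simp only [hf]
    rw [hshift, if_neg hne]
  have hv0 : f (toZMod x₀) = x := by
    simp only [hf]
    rw [hbase, if_pos rfl]
  have := dist_eq_zero.mp hdist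
  rw [hv1, hv0] at this
  exact this.symm

end MetricCotypePaper

open MetricCotypePaper in
/-- **Lemma 6.2 (Submultiplicativity).**  For every metric space `M` and all positive
integers `ℓ, k, s, t`, `B(M; ℓk, st) ≤ B(M; ℓ, s)·B(M; k, t)`. -/
theorem Bconst_submultiplicative (M : Type*) [MetricSpace M] (ℓ k s t : ℕ)
    (hℓ : 1 ≤ ℓ) (hk : 1 ≤ k) (hs : 1 ≤ s) (ht : 1 ≤ t) :
    Bconst M (ℓ * k) (s * t) ≤ Bconst M ℓ s * Bconst M k t := by
  by_cases hsub : ∀ x y : M, x = y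
  · rw [Bconst_eq_zero_of_subsingleton hsub]
    exact zero_le
  push_neg at hsub
  obtain ⟨x, y, hxy⟩ := hsub
  have ha0 : Bconst M ℓ s ≠ 0 := fun h0 => hxy (eq_of_Bconst_eq_zero hℓ hs h0 x y)
  have hb0 : Bconst M k t ≠ 0 := fun h0 => hxy (eq_of_Bconst_eq_zero hk ht h0 x y)
  by_cases hat : Bconst M ℓ s = ⊤
  · rw [hat, ENNReal.top_mul hb0]
    exact le_top
  by_cases hbt : Bconst M k t = ⊤
  · rw [hbt, ENNReal.mul_top ha0]
    exact le_top
  have key : ∀ B₁ : ℝ, 0 < B₁ → BIneq M ℓ s B₁ → ∀ B₂ : ℝ, 0 < B₂ → BIneq M k t B₂ →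
      Bconst M (ℓ * k) (s * t) ≤ ENNReal.ofReal B₁ * ENNReal.ofReal B₂ := by
    intro B₁ hB₁ hI₁ B₂ hB₂ hI₂
    calc Bconst M (ℓ * k) (s * t) ≤ ENNReal.ofReal (B₁ * B₂) :=
          Bconst_le_ofReal (mul_pos hB₁ hB₂) (BIneq.mul hℓ hI₁ hI₂)
      _ = ENNReal.ofReal B₁ * ENNReal.ofReal B₂ := ENNReal.ofReal_mul hB₁.le
  have stepA : ∀ B₁ : ℝ, 0 < B₁ → BIneq M ℓ s B₁ →
      Bconst M (ℓ * k) (s * t) ≤ ENNReal.ofReal B₁ * Bconst M k t := by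
    intro B₁ hB₁ hI₁
    have hne0 : ENNReal.ofReal B₁ ≠ 0 := (ENNReal.ofReal_pos.mpr hB₁).ne'
    have hnet : ENNReal.ofReal B₁ ≠ ⊤ := ENNReal.ofReal_ne_top
    rw [mul_comm (ENNReal.ofReal B₁), ← ENNReal.div_le_iff_le_mul (Or.inl hne0) (Or.inl hnet)]
    refine le_Bconst ?_
    intro B₂ hB₂ hI₂
    rw [ENNReal.div_le_iff_le_mul (Or.inl hne0) (Or.inl hnet), mul_comm (ENNReal.ofReal B₂)]
    exact key B₁ hB₁ hI₁ B₂ hB₂ hI₂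
  rw [← ENNReal.div_le_iff_le_mul (Or.inl hb0) (Or.inl hbt)]
  refine le_Bconst ?_
  intro B₁ hB₁ hI₁
  rw [ENNReal.div_le_iff_le_mul (Or.inl hb0) (Or.inl hbt)]
  exact stepA B₁ hB₁ hI₁
end
end

section
/- Let (M,d_M) be a metric space, K > 0, q < ∞, and suppose m := m_q^{(2)}(M;n,K) < ∞. Then every embedding of the torus ((ℤ/mℤ)^n, d_{ℤ_m^n}) into M has distortion at least n^{1/q}/(2K), i.e. c_M(ℤ_m^n) ≥ n^{1/q}/(2K). -/
open scoped BigOperators ENNReal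
open Filter

noncomputable section

namespace MetricCotypePaper

/-- The shortest-path metric on `(ℤ/mℤ)^n` induced by the `ℓ_∞` Cayley graph
(`x ∼ y` iff `x ≠ y` and `x − y ∈ {−1,0,1}^n`), i.e. the quotient metric of
`(ℤ^n, ℓ_∞)` by `(mℤ)^n`. -/
def torusDist (m n : ℕ) (x y : Fin n → ZMod m) : ℝ :=
  ((Finset.univ.sup fun i : Fin n => min (x i - y i).val (y i - x i).val : ℕ) : ℝ)

namespace AuxCotype

lemma torusDist_add_left (m n : ℕ) (x s : Fin n → ZMod m) :
    torusDist m n (x + s) x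
      = ((Finset.univ.sup fun i : Fin n => min (s i).val (-(s i)).val : ℕ) : ℝ) := by
  unfold torusDist
  congr 1
  apply Finset.sup_congr rfl
  intro i _
  have h1 : (x + s) i - x i = s i := by simp
  have h2 : x i - (x + s) i = -(s i) := by simp
  rw [h1, h2]

lemma torusDist_half (m n : ℕ) (hm : Even m) (hm2 : 2 ≤ m) (x : Fin n → ZMod m) (j : Fin n) :
    ((m / 2 : ℕ) : ℝ) ≤ torusDist m n (x + Pi.single j ((m / 2 : ℕ) : ZMod m)) x := by
  haveI : NeZero m := ⟨by omega⟩
  rw [torusDist_add_left]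
  have hlt : m / 2 < m := Nat.div_lt_self (by omega) one_lt_two
  have hval : (((m / 2 : ℕ) : ZMod m)).val = m / 2 := ZMod.val_natCast_of_lt hlt
  have hneg : -(((m / 2 : ℕ) : ZMod m)) = ((m / 2 : ℕ) : ZMod m) := by
    have hadd : ((m / 2 : ℕ) : ZMod m) + ((m / 2 : ℕ) : ZMod m) = 0 := by
      rw [← Nat.cast_add]
      obtain ⟨k, hk⟩ := hm
      have h2 : m / 2 + m / 2 = m := by omega
      rw [h2, ZMod.natCast_self]
    exact neg_eq_of_add_eq_zero_left hadd
  have key : m / 2 ≤ Finset.univ.sup fun i : Fin n =>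
      min ((Pi.single j ((m / 2 : ℕ) : ZMod m) : Fin n → ZMod m) i).val
        (-((Pi.single j ((m / 2 : ℕ) : ZMod m) : Fin n → ZMod m) i)).val := by
    refine le_trans ?_ (Finset.le_sup (Finset.mem_univ j))
    simp [Pi.single_eq_same, hneg, hval]
  exact_mod_cast key

lemma torusDist_eps3_le (m n : ℕ) (hm2 : 2 ≤ m) (x : Fin n → ZMod m) (ε : Fin n → Fin 3) :
    torusDist m n (x + eps3 m ε) x ≤ 1 := by
  haveI : NeZero m := ⟨by omega⟩
  haveI : Fact (1 < m) := ⟨by omega⟩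
  rw [torusDist_add_left]
  have key : (Finset.univ.sup fun i : Fin n =>
      min ((eps3 m ε i)).val (-(eps3 m ε i)).val) ≤ 1 := by
    apply Finset.sup_le
    intro i _
    have h3 : (ε i : ℕ) = 0 ∨ (ε i : ℕ) = 1 ∨ (ε i : ℕ) = 2 := by omega
    have hv1 : (1 : ZMod m).val = 1 := ZMod.val_one m
    rcases h3 with h | h | h
    · have he : eps3 m ε i = -1 := by
        unfold eps3; rw [h]; norm_num
      rw [he, neg_neg]
      exact le_trans (min_le_right _ _) (le_of_eq hv1)
    · have he : eps3 m ε i = 0 := by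
        unfold eps3; rw [h]; norm_num
      rw [he]
      simp
    · have he : eps3 m ε i = 1 := by
        unfold eps3; rw [h]; norm_num
      rw [he]
      exact le_trans (min_le_left _ _) (le_of_eq hv1)
  exact_mod_cast key

lemma one_le_torusDist_single_one (m n : ℕ) (hm2 : 2 ≤ m) (j : Fin n) :
    (1 : ℝ) ≤ torusDist m n ((0 : Fin n → ZMod m) + Pi.single j 1) 0 := by
  haveI : NeZero m := ⟨by omega⟩
  haveI : Fact (1 < m) := ⟨by omega⟩
  rw [torusDist_add_left]
  have key : 1 ≤ Finset.univ.sup fun i : Fin n =>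
      min ((Pi.single j (1 : ZMod m) : Fin n → ZMod m) i).val
        (-((Pi.single j (1 : ZMod m) : Fin n → ZMod m) i)).val := by
    refine le_trans ?_ (Finset.le_sup (Finset.mem_univ j))
    have hv1 : (1 : ZMod m).val = 1 := ZMod.val_one m
    have hne : (-1 : ZMod m) ≠ 0 := by
      simp only [ne_eq, neg_eq_zero]
      exact one_ne_zero
    have hv2 : 1 ≤ (-1 : ZMod m).val := by
      rcases Nat.eq_zero_or_pos (-1 : ZMod m).val with h | h
      · exact absurd ((ZMod.val_eq_zero _).mp h) hne
      · exact h
    simp only [Pi.single_eq_same, hv1]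
    omega
  exact_mod_cast key

end AuxCotype

end MetricCotypePaper

open MetricCotypePaper MetricCotypePaper.AuxCotype

/-- **Lemma 6.8.**  Let `M` be a metric space, `K > 0`, `q < ∞`, and suppose
`m = m_q^{(2)}(M; n, K) < ∞`.  Then every embedding of the torus
`((ℤ/mℤ)^n, d_{ℤ_m^n})` into `M` has distortion at least `n^{1/q}/(2K)`. -/
theorem torus_distortion_lower_bound (M : Type*) [MetricSpace M] (K q : ℝ) (hK : 0 < K)
    (n : ℕ) (hn : 1 ≤ n) (m : ℕ) (hm : Even m) (hm0 : 0 < m)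
    (hineq : CotypeIneq M 2 q n m K)
    (hmin : ∀ m' : ℕ, Even m' → 0 < m' → CotypeIneq M 2 q n m' K → m ≤ m') :
    ∀ (f : (Fin n → ZMod m) → M) (r D : ℝ), 0 < r →
      (∀ x y : Fin n → ZMod m,
        r * torusDist m n x y ≤ dist (f x) (f y) ∧
          dist (f x) (f y) ≤ D * (r * torusDist m n x y)) →
      (n : ℝ) ^ (1 / q) / (2 * K) ≤ D := by
  intro f r D hr hfd
  have hm2 : 2 ≤ m := by
    obtain ⟨k, hk⟩ := hm; omega
  -- D is positive
  have j0 : Fin n := ⟨0, hn⟩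
  have htd := one_le_torusDist_single_one m n hm2 j0
  obtain ⟨hlow0, hup0⟩ := hfd ((0 : Fin n → ZMod m) + Pi.single j0 1) 0
  set t0 : ℝ := torusDist m n ((0 : Fin n → ZMod m) + Pi.single j0 1) 0 with ht0def
  have hrt : 0 < r * t0 := mul_pos hr (lt_of_lt_of_le one_pos htd)
  have hDrt : 0 < D * (r * t0) := lt_of_lt_of_le hrt (le_trans hlow0 hup0)
  have hD : 0 < D := by
    by_contra h
    push_neg at h
    nlinarith
  -- cast facts
  have hn1 : (1 : ℝ) ≤ (n : ℝ) := by exact_mod_cast hn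
  have hnpos : (0 : ℝ) < (n : ℝ) := by linarith
  have hmhalf : ((m / 2 : ℕ) : ℝ) = (m : ℝ) / 2 := by
    obtain ⟨k, hk⟩ := hm
    have h1 : m / 2 = k := by omega
    have h2 : (m : ℝ) = 2 * (k : ℝ) := by
      rw [hk]; push_cast; ring
    rw [h1, h2]; ring
  have key := hineq f
  -- lower bound for the LHS
  have hL : (n : ℝ) * (m : ℝ) ^ n * (r * ((m : ℝ) / 2)) ^ 2
      ≤ ∑ j : Fin n, ∑ x : Fin n → Fin m,
        dist (f (toZMod x + Pi.single j ((m / 2 : ℕ) : ZMod m))) (f (toZMod x)) ^ (2 : ℝ) := by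
    have hterm : ∀ (j : Fin n) (x : Fin n → Fin m),
        (r * ((m : ℝ) / 2)) ^ 2
          ≤ dist (f (toZMod x + Pi.single j ((m / 2 : ℕ) : ZMod m))) (f (toZMod x)) ^ (2 : ℝ) := by
      intro j x
      rw [Real.rpow_two]
      have h1 := (hfd (toZMod x + Pi.single j ((m / 2 : ℕ) : ZMod m)) (toZMod x)).1
      have h2 := torusDist_half m n hm hm2 (toZMod x) j
      rw [hmhalf] at h2
      have h3 : r * ((m : ℝ) / 2) ≤ dist (f (toZMod x + Pi.single j ((m / 2 : ℕ) : ZMod m)))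
          (f (toZMod x)) := le_trans (by nlinarith) h1
      have h4 : 0 ≤ r * ((m : ℝ) / 2) := by positivity
      exact pow_le_pow_left₀ h4 h3 2
    calc (n : ℝ) * (m : ℝ) ^ n * (r * ((m : ℝ) / 2)) ^ 2
        = ∑ _j : Fin n, ∑ _x : Fin n → Fin m, (r * ((m : ℝ) / 2)) ^ 2 := by
          simp only [Finset.sum_const, Finset.card_univ, Fintype.card_fun,
            Fintype.card_fin, nsmul_eq_mul]
          push_cast
          ring
      _ ≤ _ := by
          refine Finset.sum_le_sum fun j _ => Finset.sum_le_sum fun x _ => hterm j x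
  -- upper bound for the double sum on the RHS
  have hR : ∑ ε : Fin n → Fin 3, ∑ x : Fin n → Fin m,
        dist (f (toZMod x + eps3 m ε)) (f (toZMod x)) ^ (2 : ℝ)
      ≤ (3 : ℝ) ^ n * ((m : ℝ) ^ n * (D * r) ^ 2) := by
    have hterm : ∀ (ε : Fin n → Fin 3) (x : Fin n → Fin m),
        dist (f (toZMod x + eps3 m ε)) (f (toZMod x)) ^ (2 : ℝ) ≤ (D * r) ^ 2 := by
      intro ε x
      rw [Real.rpow_two]
      have h1 := (hfd (toZMod x + eps3 m ε) (toZMod x)).2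
      have h2 := torusDist_eps3_le m n hm2 (toZMod x) ε
      have h3 : (0 : ℝ) ≤ torusDist m n (toZMod x + eps3 m ε) (toZMod x) := by
        unfold torusDist; positivity
      have h4 : dist (f (toZMod x + eps3 m ε)) (f (toZMod x)) ≤ D * r := by nlinarith
      exact pow_le_pow_left₀ dist_nonneg h4 2
    calc ∑ ε : Fin n → Fin 3, ∑ x : Fin n → Fin m,
          dist (f (toZMod x + eps3 m ε)) (f (toZMod x)) ^ (2 : ℝ)
        ≤ ∑ _ε : Fin n → Fin 3, ∑ _x : Fin n → Fin m, (D * r) ^ 2 := by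
          refine Finset.sum_le_sum fun ε _ => Finset.sum_le_sum fun x _ => hterm ε x
      _ = (3 : ℝ) ^ n * ((m : ℝ) ^ n * (D * r) ^ 2) := by
          simp only [Finset.sum_const, Finset.card_univ, Fintype.card_fun,
            Fintype.card_fin, nsmul_eq_mul]
          push_cast
          ring
  have hc : (0 : ℝ) ≤ K ^ (2 : ℝ) * (m : ℝ) ^ (2 : ℝ) * (n : ℝ) ^ (1 - 2 / q) *
      ((3 : ℝ) ^ n)⁻¹ := by positivity
  have hchain : (n : ℝ) * (m : ℝ) ^ n * (r * ((m : ℝ) / 2)) ^ 2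
      ≤ K ^ (2 : ℝ) * (m : ℝ) ^ (2 : ℝ) * (n : ℝ) ^ (1 - 2 / q) * ((3 : ℝ) ^ n)⁻¹ *
        ((3 : ℝ) ^ n * ((m : ℝ) ^ n * (D * r) ^ 2)) :=
    le_trans hL (le_trans key (mul_le_mul_of_nonneg_left hR hc))
  -- simplify rpow squares
  rw [Real.rpow_two, Real.rpow_two] at hchain
  have h3n : (0 : ℝ) < (3 : ℝ) ^ n := by positivity
  have hmn : (0 : ℝ) < (m : ℝ) ^ n := by positivity
  have hmR : (0 : ℝ) < (m : ℝ) := by exact_mod_cast hm0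
  have hexp : (0 : ℝ) < (n : ℝ) ^ (1 - 2 / q) := Real.rpow_pos_of_pos hnpos _
  -- cancel to get:  n ≤ 4 K² D² n^{1-2/q}
  have hstep : (n : ℝ) ≤ 4 * K ^ 2 * D ^ 2 * (n : ℝ) ^ (1 - 2 / q) := by
    have h1 : (n : ℝ) * ((m : ℝ) ^ n * ((m : ℝ) ^ 2 * r ^ 2 / 4))
        ≤ 4 * K ^ 2 * D ^ 2 * (n : ℝ) ^ (1 - 2 / q) *
          ((m : ℝ) ^ n * ((m : ℝ) ^ 2 * r ^ 2 / 4)) := by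
      have hrw : K ^ 2 * (m : ℝ) ^ 2 * (n : ℝ) ^ (1 - 2 / q) * ((3 : ℝ) ^ n)⁻¹ *
          ((3 : ℝ) ^ n * ((m : ℝ) ^ n * (D * r) ^ 2))
          = 4 * K ^ 2 * D ^ 2 * (n : ℝ) ^ (1 - 2 / q) *
            ((m : ℝ) ^ n * ((m : ℝ) ^ 2 * r ^ 2 / 4)) := by
        field_simp
      rw [hrw] at hchain
      nlinarith [hchain]
    have h2 : (0 : ℝ) < (m : ℝ) ^ n * ((m : ℝ) ^ 2 * r ^ 2 / 4) := by positivity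
    exact le_of_mul_le_mul_right (by linarith [h1]) h2
  -- hence n^{2/q} ≤ (2 K D)²
  have hsplit : (n : ℝ) = (n : ℝ) ^ ((2 : ℝ) / q) * (n : ℝ) ^ (1 - 2 / q) := by
    rw [← Real.rpow_add hnpos]
    have : (2 : ℝ) / q + (1 - 2 / q) = 1 := by ring
    rw [this, Real.rpow_one]
  have hsq : (n : ℝ) ^ ((2 : ℝ) / q) ≤ (2 * K * D) ^ 2 := by
    have h1 : (n : ℝ) ^ ((2 : ℝ) / q) * (n : ℝ) ^ (1 - 2 / q)
        ≤ 4 * K ^ 2 * D ^ 2 * (n : ℝ) ^ (1 - 2 / q) := by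
      rw [← hsplit]; exact hstep
    have h2 : (n : ℝ) ^ ((2 : ℝ) / q) ≤ 4 * K ^ 2 * D ^ 2 :=
      le_of_mul_le_mul_right h1 hexp
    have h3 : (2 * K * D) ^ 2 = 4 * K ^ 2 * D ^ 2 := by ring
    linarith [h2]
  -- take square roots
  have hpow2 : ((n : ℝ) ^ ((1 : ℝ) / q)) ^ 2 = (n : ℝ) ^ ((2 : ℝ) / q) := by
    rw [sq, ← Real.rpow_add hnpos]
    congr 1
    ring
  have hfin : (n : ℝ) ^ ((1 : ℝ) / q) ≤ 2 * K * D := by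
    have h1 : ((n : ℝ) ^ ((1 : ℝ) / q)) ^ 2 ≤ (2 * K * D) ^ 2 := by rw [hpow2]; exact hsq
    have h2 := Real.sqrt_le_sqrt h1
    rwa [Real.sqrt_sq (by positivity), Real.sqrt_sq (by positivity)] at h2
  rw [div_le_iff₀ (by positivity)]
  linarith [hfin]
end
end
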